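/- arXiv:1606.00732 — 3 statements merged into one kernel-verified Lean document; each statement's English description precedes it below -/
import Mathlib

section
/- Fix n ≥ 2, L > 0, and boundary values q⁰(0), q⁰(L) ∈ (ℝ²)ⁿ. Define G₀(f) := π ∫₀^L ( (1/2) Σ_{i=1}^n |f_i'(z)|² - Σ_{i≠j} log|f_i(z) - f_j(z)| ) dz on the admissible class A₀ of f ∈ H¹((0,L);(ℝ²)ⁿ) with Σ_i δ_{f_i(z)} = Σ_i δ_{q⁰_i(z)} for z ∈ {0,L}. Then for every M ∈ ℝ there exists C = C(M, L, n, q⁰) such that every f ∈ A₀ with G₀(f) ≤ M satisfies ‖f‖_{L^∞} + ‖f'‖_{L²} ≤ C; i.e., sublevel sets of G₀ in A₀ are bounded in H¹((0,L);(ℝ²)ⁿ). -/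
set_option maxHeartbeats 1000000


open MeasureTheory Set

private lemma log_le_self' (x : ℝ) (hx : 0 ≤ x) : Real.log x ≤ x := by
  rcases hx.eq_or_lt with h | h
  · simp [← h]
  · linarith [Real.log_le_sub_one_of_pos h]

/-- sublevel sets of the renormalized energy
`G₀(f) = π ∫₀^L ( (1/2) Σ_i |f_i'|² - Σ_{i≠j} log|f_i - f_j| ) dz`
on the admissible class `A₀` (curves in `H¹((0,L);(ℝ²)ⁿ)` whose endpoint
configurations coincide, as unordered tuples, with the prescribed boundary data)
are bounded in `H¹`: for every `M` there is `C = C(M,L,n,q⁰)` bounding both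
`‖f‖_{L^∞}` and `‖f'‖_{L²}` for all admissible `f` with `G₀(f) ≤ M`. -/
theorem stmt9 (n : ℕ) (hn : 2 ≤ n) (L : ℝ) (hL : 0 < L)
    (q0 qL : Fin n → EuclideanSpace ℝ (Fin 2)) (M : ℝ) :
    ∃ C : ℝ, ∀ (f f' : Fin n → ℝ → EuclideanSpace ℝ (Fin 2)),
      (∀ i, IntegrableOn (f' i) (Icc 0 L)) →
      (∀ i, IntegrableOn (fun t => ‖f' i t‖^2) (Icc 0 L)) →
      (∀ i, ∀ z ∈ Icc (0:ℝ) L, ∀ z' ∈ Icc (0:ℝ) L,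
          f i z' - f i z = ∫ t in z..z', f' i t) →
      (∃ σ : Equiv.Perm (Fin n), ∀ i, f i 0 = q0 (σ i)) →
      (∃ τ : Equiv.Perm (Fin n), ∀ i, f i L = qL (τ i)) →
      Real.pi * ((1/2) * ∫ z in (0:ℝ)..L, ∑ i, ‖f' i z‖^2)
        - Real.pi * ∫ z in (0:ℝ)..L, ∑ i, ∑ j,
            (if i = j then (0:ℝ) else Real.log ‖f i z - f j z‖) ≤ M →
      (∀ i, ∀ z ∈ Icc (0:ℝ) L, ‖f i z‖ ≤ C) ∧
      Real.sqrt (∫ z in (0:ℝ)..L, ∑ i, ‖f' i z‖^2) ≤ C := by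
  have hπ := Real.pi_pos
  have hn0 : (0:ℝ) < (n:ℝ) := by
    have : (0:ℕ) < n := by omega
    exact_mod_cast this
  set ε : ℝ := 1 / (8 * L * (n:ℝ)^2) with hεdef
  have hε : 0 < ε := by positivity
  set Q : ℝ := (∑ i, ‖q0 i‖) + (∑ i, ‖qL i‖) with hQdef
  have hQ0 : 0 ≤ Q := by positivity
  have hQle : ∀ i, ‖q0 i‖ ≤ Q := by
    intro i
    have h1 : ‖q0 i‖ ≤ ∑ j, ‖q0 j‖ :=
      Finset.single_le_sum (fun j _ => norm_nonneg _) (Finset.mem_univ i)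
    have h2 : (0:ℝ) ≤ ∑ j, ‖qL j‖ := Finset.sum_nonneg fun j _ => norm_nonneg _
    simp only [hQdef]; linarith
  set CE : ℝ := (4 / Real.pi) * (M + Real.pi * (2 * L * (n:ℝ)^2) * Q
      + Real.pi * (2 * L * (n:ℝ)^2) * (L / (4 * ε))) with hCEdef
  refine ⟨(Q + ε * CE + L / (4 * ε)) + Real.sqrt CE, ?_⟩
  intro f f' hf1 hf2 hftc hbd0 _hbdL hG
  obtain ⟨σ, hσ⟩ := hbd0
  set E : ℝ := ∫ z in (0:ℝ)..L, ∑ i, ‖f' i z‖^2 with hEdef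
  -- integrability facts
  have hint2 : ∀ i, IntervalIntegrable (fun z => ‖f' i z‖^2) volume 0 L := by
    intro i
    rw [intervalIntegrable_iff_integrableOn_Ioc_of_le hL.le]
    exact (hf2 i).mono_set Ioc_subset_Icc_self
  have hint1 : ∀ i, IntervalIntegrable (fun z => ‖f' i z‖) volume 0 L := by
    intro i
    rw [intervalIntegrable_iff_integrableOn_Ioc_of_le hL.le]
    exact ((hf1 i).mono_set Ioc_subset_Icc_self).norm
  have hintsum : IntervalIntegrable (fun z => ∑ i, ‖f' i z‖^2) volume 0 L := by
    rw [intervalIntegrable_iff_integrableOn_Ioc_of_le hL.le]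
    exact integrable_finset_sum _ (fun i _ => (hf2 i).mono_set Ioc_subset_Icc_self)
  have hE0 : 0 ≤ E :=
    intervalIntegral.integral_nonneg hL.le (fun z _ => Finset.sum_nonneg fun i _ => by positivity)
  have hEi : ∀ i, (∫ z in (0:ℝ)..L, ‖f' i z‖^2) ≤ E := by
    intro i
    exact intervalIntegral.integral_mono_on hL.le (hint2 i) hintsum
      (fun z _ => Finset.single_le_sum (f := fun j => ‖f' j z‖^2)
        (fun j _ => by positivity) (Finset.mem_univ i))
  -- pointwise sup bound
  have hB : ∀ i, ∀ z ∈ Icc (0:ℝ) L, ‖f i z‖ ≤ Q + ε * E + L / (4 * ε) := by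
    intro i z hz
    have hz0 : (0:ℝ) ≤ z := hz.1
    have key := hftc i 0 (left_mem_Icc.2 hL.le) z hz
    have hfz : f i z = q0 (σ i) + ∫ t in (0:ℝ)..z, f' i t := by
      rw [← hσ i, ← key]; abel
    have hii1 : IntervalIntegrable (fun t => ‖f' i t‖) volume 0 z :=
      (hint1 i).mono_set (by
        rw [uIcc_of_le hz0, uIcc_of_le hL.le]
        exact Icc_subset_Icc le_rfl hz.2)
    have hii2 : IntervalIntegrable (fun t => ‖f' i t‖) volume z L :=
      (hint1 i).mono_set (by
        rw [uIcc_of_le hz.2, uIcc_of_le hL.le]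
        exact Icc_subset_Icc hz0 le_rfl)
    have hsplit : (∫ t in (0:ℝ)..z, ‖f' i t‖) + (∫ t in z..L, ‖f' i t‖)
        = ∫ t in (0:ℝ)..L, ‖f' i t‖ :=
      intervalIntegral.integral_add_adjacent_intervals hii1 hii2
    have htail : 0 ≤ ∫ t in z..L, ‖f' i t‖ :=
      intervalIntegral.integral_nonneg hz.2 (fun t _ => norm_nonneg _)
    have hstep1 : ‖f i z‖ ≤ ‖q0 (σ i)‖ + ∫ t in (0:ℝ)..z, ‖f' i t‖ := by
      rw [hfz]
      exact (norm_add_le _ _).trans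
        (by gcongr; exact intervalIntegral.norm_integral_le_integral_norm hz0)
    have hstep2 : (∫ t in (0:ℝ)..L, ‖f' i t‖)
        ≤ ∫ t in (0:ℝ)..L, (ε * ‖f' i t‖^2 + 1/(4*ε)) := by
      apply intervalIntegral.integral_mono_on hL.le (hint1 i)
        (((hint2 i).const_mul ε).add (intervalIntegrable_const))
      intro t _
      have hkey : ε * ‖f' i t‖^2 + 1/(4*ε) - ‖f' i t‖
          = (2 * ε * ‖f' i t‖ - 1)^2 / (4*ε) := by
        field_simp
        ring
      nlinarith [div_nonneg (sq_nonneg (2 * ε * ‖f' i t‖ - 1)) (by positivity : (0:ℝ) ≤ 4*ε)]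
    have hstep3 : (∫ t in (0:ℝ)..L, (ε * ‖f' i t‖^2 + 1/(4*ε)))
        = ε * (∫ t in (0:ℝ)..L, ‖f' i t‖^2) + L / (4*ε) := by
      rw [intervalIntegral.integral_add ((hint2 i).const_mul ε) intervalIntegrable_const,
        intervalIntegral.integral_const_mul, intervalIntegral.integral_const]
      rw [smul_eq_mul]; ring
    have hεE : ε * (∫ t in (0:ℝ)..L, ‖f' i t‖^2) ≤ ε * E :=
      mul_le_mul_of_nonneg_left (hEi i) hε.le
    have := hQle (σ i)
    linarith
  set B : ℝ := Q + ε * E + L / (4 * ε) with hBdef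
  have hB0 : 0 ≤ B := by
    have h1 : 0 ≤ ε * E := mul_nonneg hε.le hE0
    have h2 : 0 ≤ L / (4 * ε) := by positivity
    simp only [hBdef]; linarith
  -- pointwise log bound
  have hlog : ∀ z ∈ Icc (0:ℝ) L,
      (∑ i, ∑ j, (if i = j then (0:ℝ) else Real.log ‖f i z - f j z‖))
        ≤ (n:ℝ)^2 * (2 * B) := by
    intro z hz
    calc (∑ i, ∑ j, (if i = j then (0:ℝ) else Real.log ‖f i z - f j z‖))
        ≤ ∑ _i : Fin n, ∑ _j : Fin n, (2 * B) := by
          apply Finset.sum_le_sum; intro i _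
          apply Finset.sum_le_sum; intro j _
          split
          · linarith
          · refine (log_le_self' _ (norm_nonneg _)).trans ?_
            calc ‖f i z - f j z‖ ≤ ‖f i z‖ + ‖f j z‖ := norm_sub_le _ _
              _ ≤ B + B := add_le_add (hB i z hz) (hB j z hz)
              _ = 2 * B := by ring
      _ = (n:ℝ)^2 * (2 * B) := by
          simp [Finset.sum_const, Finset.card_univ]; ring
  -- integral log bound
  have hlogint : (∫ z in (0:ℝ)..L, ∑ i, ∑ j,
      (if i = j then (0:ℝ) else Real.log ‖f i z - f j z‖)) ≤ L * ((n:ℝ)^2 * (2 * B)) := by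
    by_cases hI : IntervalIntegrable (fun z => ∑ i, ∑ j,
        (if i = j then (0:ℝ) else Real.log ‖f i z - f j z‖)) volume 0 L
    · calc (∫ z in (0:ℝ)..L, ∑ i, ∑ j,
          (if i = j then (0:ℝ) else Real.log ‖f i z - f j z‖))
          ≤ ∫ _z in (0:ℝ)..L, (n:ℝ)^2 * (2 * B) :=
            intervalIntegral.integral_mono_on hL.le hI intervalIntegrable_const hlog
        _ = L * ((n:ℝ)^2 * (2 * B)) := by
            rw [intervalIntegral.integral_const, smul_eq_mul]; ring
    · rw [intervalIntegral.integral_undef hI]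
      positivity
  -- energy bound
  have h4 : (2 * L * (n:ℝ)^2) * ε = 1/4 := by
    rw [hεdef]; field_simp; ring
  have hPE : Real.pi / 4 * E ≤ M + Real.pi * (2 * L * (n:ℝ)^2) * Q
      + Real.pi * (2 * L * (n:ℝ)^2) * (L / (4 * ε)) := by
    have hmul : Real.pi * (∫ z in (0:ℝ)..L, ∑ i, ∑ j,
        (if i = j then (0:ℝ) else Real.log ‖f i z - f j z‖))
        ≤ Real.pi * (L * ((n:ℝ)^2 * (2 * B))) :=
      mul_le_mul_of_nonneg_left hlogint hπ.le
    have hBexp : L * ((n:ℝ)^2 * (2 * B)) = (2 * L * (n:ℝ)^2) * Q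
        + (2 * L * (n:ℝ)^2) * ε * E + (2 * L * (n:ℝ)^2) * (L / (4 * ε)) := by
      simp only [hBdef]; ring
    rw [hBexp, h4] at hmul
    nlinarith [hG]
  have hEC : E ≤ CE := by
    have h1 : E = (4 / Real.pi) * (Real.pi / 4 * E) := by
      field_simp
    rw [h1, hCEdef]
    exact mul_le_mul_of_nonneg_left hPE (by positivity)
  have hCE0 : 0 ≤ CE := hE0.trans hEC
  clear_value ε Q CE E B
  constructor
  · intro i z hz
    have h1 := hB i z hz
    have h2 : B ≤ Q + ε * CE + L / (4 * ε) := by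
      have := mul_le_mul_of_nonneg_left hEC hε.le
      simp only [hBdef]
      linarith
    have h3 : 0 ≤ Real.sqrt CE := Real.sqrt_nonneg _
    linarith
  · have h1 : Real.sqrt E ≤ Real.sqrt CE := Real.sqrt_le_sqrt hEC
    have h2 : 0 ≤ Q + ε * CE + L / (4 * ε) := by
      have : 0 ≤ ε * CE := mul_nonneg hε.le hCE0
      have : 0 ≤ L / (4 * ε) := by positivity
      positivity
    linarith
end

section
/- Let f = (f₁,…,fₙ) ∈ H¹((0,L);(ℝ²)ⁿ) with n ≥ 2. Then for all sufficiently small δ > 0 there exists a = (a₁,…,aₙ) ∈ (ℝ²)ⁿ with |a_i| ≤ δ^{1/3} for all i, such that for every z ∈ (0,L) and every i ≠ j, |(f_i(z) + a_i) - (f_j(z) + a_j)| ≥ δ. -/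
open MeasureTheory Set Metric

lemma cs_aux {u v : ℝ} (huv : u ≤ v) {h : ℝ → EuclideanSpace ℝ (Fin 2)}
    (h1 : IntegrableOn h (Icc u v))
    (h2 : IntegrableOn (fun t => ‖h t‖^2) (Icc u v)) :
    ∫ t in Icc u v, ‖h t‖ ≤ Real.sqrt ((v - u) * ∫ t in Icc u v, ‖h t‖^2) := by
  have hconj : Real.HolderConjugate 2 2 := Real.HolderConjugate.two_two
  have hmem1 : MemLp (fun t => ‖h t‖) (ENNReal.ofReal 2) (volume.restrict (Icc u v)) := by
    rw [show ENNReal.ofReal 2 = 2 by norm_num]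
    exact (memLp_two_iff_integrable_sq h1.aestronglyMeasurable.norm).2 h2
  have hmem2 : MemLp (fun _ : ℝ => (1:ℝ)) (ENNReal.ofReal 2) (volume.restrict (Icc u v)) := by
    have : IsFiniteMeasure (volume.restrict (Icc u v)) := by
      constructor
      rw [Measure.restrict_apply_univ, Real.volume_Icc]
      exact ENNReal.ofReal_lt_top
    exact memLp_const 1
  have key := MeasureTheory.integral_mul_le_Lp_mul_Lq_of_nonneg hconj
    (f := fun t => ‖h t‖) (g := fun _ => (1:ℝ))
    (Filter.Eventually.of_forall fun t => norm_nonneg _)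
    (Filter.Eventually.of_forall fun t => zero_le_one) hmem1 hmem2
  simp only [mul_one, Real.rpow_two, one_pow] at key
  have e2 : ∫ _t in Icc u v, (1:ℝ) = v - u := by
    simp [Real.volume_Icc, ENNReal.toReal_ofReal (sub_nonneg.2 huv), huv]
  rw [e2] at key
  have hI2 : 0 ≤ ∫ t in Icc u v, ‖h t‖^2 :=
    integral_nonneg fun t => sq_nonneg _
  calc ∫ t in Icc u v, ‖h t‖
      ≤ (∫ t in Icc u v, ‖h t‖^2) ^ ((1:ℝ)/2) * (v - u) ^ ((1:ℝ)/2) := key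
    _ = Real.sqrt ((v - u) * ∫ t in Icc u v, ‖h t‖^2) := by
        rw [← Real.sqrt_eq_rpow, ← Real.sqrt_eq_rpow,
          ← Real.sqrt_mul hI2, mul_comm]

lemma seg_bound {u v w : ℝ} {h : ℝ → EuclideanSpace ℝ (Fin 2)} (huv : u ≤ v) (hvw : v ≤ w)
    (h1 : IntegrableOn h (Icc u w))
    (h2 : IntegrableOn (fun t => ‖h t‖^2) (Icc u w)) :
    ‖∫ t in u..v, h t‖ ≤ Real.sqrt ((w - u) * ∫ t in Icc u w, ‖h t‖^2) := by
  have hsub : Icc u v ⊆ Icc u w := Icc_subset_Icc_right hvw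
  have h1' := h1.mono_set hsub
  have h2' := h2.mono_set hsub
  have step1 : ‖∫ t in u..v, h t‖ ≤ ∫ t in Icc u v, ‖h t‖ := by
    have e : ∫ t in Icc u v, ‖h t‖ = ∫ t in u..v, ‖h t‖ := by
      rw [intervalIntegral.integral_of_le huv, MeasureTheory.integral_Icc_eq_integral_Ioc]
    rw [e]
    exact intervalIntegral.norm_integral_le_integral_norm huv
  have step2 := cs_aux huv h1' h2'
  refine (step1.trans step2).trans (Real.sqrt_le_sqrt ?_)
  have hmono : ∫ t in Icc u v, ‖h t‖^2 ≤ ∫ t in Icc u w, ‖h t‖^2 :=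
    setIntegral_mono_set h2 (Filter.Eventually.of_forall fun t => sq_nonneg _)
      (HasSubset.Subset.eventuallyLE hsub)
  have hI : 0 ≤ ∫ t in Icc u v, ‖h t‖^2 := integral_nonneg fun t => sq_nonneg _
  apply mul_le_mul (by linarith) hmono hI (by linarith)


lemma normsq_sub_le (x y : EuclideanSpace ℝ (Fin 2)) :
    ‖x - y‖^2 ≤ 2*‖x‖^2 + 2*‖y‖^2 := by
  have h1 : ‖x - y‖ ≤ ‖x‖ + ‖y‖ := norm_sub_le _ _
  have h2 : ‖x - y‖^2 ≤ (‖x‖ + ‖y‖)^2 := pow_le_pow_left₀ (norm_nonneg _) h1 2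
  nlinarith [sq_nonneg (‖x‖ - ‖y‖)]

set_option maxHeartbeats 2000000 in
/-- translation selection. For `f = (f₁,…,fₙ) ∈ H¹((0,L);(ℝ²)ⁿ)`
(encoded via the FTC representation with `L²` derivatives), for all small `δ > 0`
there is a translation vector `a` with `|a_i| ≤ δ^{1/3}` such that the translated
curves `f_i + a_i` stay at mutual distance at least `δ` on `(0,L)`. -/
theorem stmt11 (n : ℕ) (hn : 2 ≤ n) (L : ℝ) (hL : 0 < L)
    (f f' : Fin n → ℝ → EuclideanSpace ℝ (Fin 2))
    (hInt1 : ∀ i, IntegrableOn (f' i) (Icc 0 L))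
    (hInt2 : ∀ i, IntegrableOn (fun t => ‖f' i t‖^2) (Icc 0 L))
    (hFTC : ∀ i, ∀ z ∈ Icc (0:ℝ) L, ∀ z' ∈ Icc (0:ℝ) L,
        f i z' - f i z = ∫ t in z..z', f' i t) :
    ∃ δ₀ : ℝ, 0 < δ₀ ∧ ∀ δ : ℝ, 0 < δ → δ ≤ δ₀ →
      ∃ a : Fin n → EuclideanSpace ℝ (Fin 2),
        (∀ i, ‖a i‖ ≤ δ ^ ((1:ℝ)/3)) ∧
        ∀ z ∈ Ioo (0:ℝ) L, ∀ i j : Fin n, i ≠ j →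
          δ ≤ ‖(f i z + a i) - (f j z + a j)‖ := by
  have hn0 : 0 < n := by omega
  have hnR : (0:ℝ) < n := by exact_mod_cast hn0
  set A : Fin n → ℝ := fun m => ∫ t in (0:ℝ)..L, ‖f' m t‖^2 with hA_def
  have hA : ∀ m, 0 ≤ A m := fun m =>
    intervalIntegral.integral_nonneg hL.le fun t _ => sq_nonneg _
  clear_value A
  have hSsum : 0 ≤ ∑ m, A m := Finset.sum_nonneg fun m _ => hA m
  set S : ℝ := 4 * (∑ m, A m) + 1 with hS_def
  have hS1 : 1 ≤ S := by rw [hS_def]; linarith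
  have hS0 : 0 < S := lt_of_lt_of_le one_pos hS1
  clear_value S
  set Q := Real.sqrt (L * S) with hQ_def
  have hQ : 0 < Q := Real.sqrt_pos.2 (by positivity)
  have hQ2 : Q^2 = L * S := Real.sq_sqrt (by positivity)
  clear_value Q
  set C := (n:ℝ)^2 * (4*Q + 2) with hC_def
  have hC : 0 < C := by positivity
  clear_value C
  refine ⟨min 1 ((1 / (C*(n:ℝ)^2 + 1))^3), lt_min one_pos (by positivity), ?_⟩
  intro δ hδ hδ0
  have hδ1 : δ ≤ 1 := hδ0.trans (min_le_left _ _)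
  have hδcube : δ ≤ (1 / (C*(n:ℝ)^2 + 1))^3 := hδ0.trans (min_le_right _ _)
  have hδ13pos : 0 < δ ^ ((1:ℝ)/3) := Real.rpow_pos_of_pos hδ _
  have hroot : δ ^ ((1:ℝ)/3) ≤ 1 / (C*(n:ℝ)^2 + 1) := by
    have hx : (0:ℝ) ≤ 1 / (C*(n:ℝ)^2 + 1) := by positivity
    have h1 : δ ^ ((1:ℝ)/3) ≤ ((1 / (C*(n:ℝ)^2 + 1))^3) ^ ((1:ℝ)/3) :=
      Real.rpow_le_rpow hδ.le hδcube (by norm_num)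
    rwa [← Real.rpow_natCast (1 / (C*(n:ℝ)^2 + 1)) 3, ← Real.rpow_mul hx,
      show ((3:ℕ):ℝ) * ((1:ℝ)/3) = 1 by norm_num, Real.rpow_one] at h1
  set ρ := δ ^ ((1:ℝ)/3) / n with hρ_def
  have hρ : 0 < ρ := by positivity
  -- key numeric inequality : C * δ < ρ ^ 2
  have hkey : C * δ < ρ^2 := by
    have hr2 : (δ ^ ((1:ℝ)/3))^2 = δ ^ ((2:ℝ)/3) := by
      rw [← Real.rpow_natCast (δ ^ ((1:ℝ)/3)) 2, ← Real.rpow_mul hδ.le]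
      norm_num
    have hδeq : δ = δ ^ ((1:ℝ)/3) * δ ^ ((2:ℝ)/3) := by
      rw [← Real.rpow_add hδ]; norm_num
    have hs : 0 < δ ^ ((2:ℝ)/3) := Real.rpow_pos_of_pos hδ _
    have h2 : C * (n:ℝ)^2 * (δ ^ ((1:ℝ)/3)) < 1 := by
      have h3 : C * (n:ℝ)^2 * (δ ^ ((1:ℝ)/3)) ≤ C * (n:ℝ)^2 * (1 / (C*(n:ℝ)^2 + 1)) :=
        mul_le_mul_of_nonneg_left hroot (by positivity)
      have h4 : C * (n:ℝ)^2 * (1 / (C*(n:ℝ)^2 + 1)) < 1 := by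
        rw [mul_one_div, div_lt_one (by positivity)]; linarith
      linarith
    have hρ2 : ρ^2 = δ ^ ((2:ℝ)/3) / (n:ℝ)^2 := by
      rw [hρ_def, div_pow, hr2]
    have h5 : C * (n:ℝ)^2 * (δ ^ ((1:ℝ)/3)) * (δ ^ ((2:ℝ)/3)) < 1 * (δ ^ ((2:ℝ)/3)) :=
      mul_lt_mul_of_pos_right h2 hs
    have h6 : C * (n:ℝ)^2 * δ = C * (n:ℝ)^2 * (δ ^ ((1:ℝ)/3) * δ ^ ((2:ℝ)/3)) := by
      rw [← hδeq]
    rw [hρ2, lt_div_iff₀ (by positivity : (0:ℝ) < (n:ℝ)^2)]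
    nlinarith [h5, h6]
  clear_value ρ
  -- discretization
  set N := ⌈Q / δ⌉₊ with hN_def
  have hNpos : 0 < N := Nat.ceil_pos.2 (by positivity)
  have hNge : Q / δ ≤ (N:ℝ) := Nat.le_ceil _
  have hNle : (N:ℝ) ≤ Q / δ + 1 := (Nat.ceil_lt_add_one (by positivity)).le
  have hNR : (0:ℝ) < N := by exact_mod_cast hNpos
  clear_value N
  set ε := L / N with hε_def
  have hε : 0 < ε := div_pos hL hNR
  have hNεL : (N:ℝ) * ε = L := by rw [hε_def]; field_simp
  clear_value ε
  set z : ℕ → ℝ := fun k => k * ε with hz_def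
  have hz0 : z 0 = 0 := by simp [hz_def]
  have hzN : z N = L := by rw [hz_def]; exact hNεL
  have hzsucc : ∀ k : ℕ, z k ≤ z (k+1) := by
    intro k
    simp only [hz_def]
    push_cast
    have h1 : (k:ℝ) ≤ (k:ℝ) + 1 := by linarith
    exact mul_le_mul_of_nonneg_right h1 hε.le
  have hzd : ∀ k : ℕ, z (k+1) - z k = ε := by
    intro k; simp only [hz_def]; push_cast; ring
  have hzmem : ∀ k, k ≤ N → z k ∈ Icc 0 L := by
    intro k hk
    simp only [hz_def]
    constructor
    · exact mul_nonneg (Nat.cast_nonneg k) hε.le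
    · rw [← hNεL]
      have h1 : (k:ℝ) ≤ (N:ℝ) := by exact_mod_cast hk
      exact mul_le_mul_of_nonneg_right h1 hε.le
  clear_value z
  have hIccsub : ∀ k, k + 1 ≤ N → Icc (z k) (z (k+1)) ⊆ Icc 0 L := by
    intro k hk
    exact Icc_subset_Icc (hzmem k (by omega)).1 (hzmem (k+1) hk).2
  -- difference functions
  have hh1 : ∀ i j : Fin n, IntegrableOn (fun t => f' i t - f' j t) (Icc 0 L) :=
    fun i j => (hInt1 i).sub (hInt1 j)
  have hh2 : ∀ i j : Fin n, IntegrableOn (fun t => ‖f' i t - f' j t‖^2) (Icc 0 L) := by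
    intro i j
    have hb : IntegrableOn (fun t => 2*‖f' i t‖^2 + 2*‖f' j t‖^2) (Icc 0 L) :=
      ((hInt2 i).const_mul 2).add ((hInt2 j).const_mul 2)
    refine Integrable.mono' hb ?_ ?_
    · have h0 := (hh1 i j).aestronglyMeasurable.norm
      have h1 : AEStronglyMeasurable
          (fun t => ‖f' i t - f' j t‖ * ‖f' i t - f' j t‖)
          (volume.restrict (Icc 0 L)) := h0.mul h0
      simpa [sq] using h1
    · refine Filter.Eventually.of_forall fun t => ?_
      rw [Real.norm_eq_abs, abs_of_nonneg (sq_nonneg _)]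
      exact normsq_sub_le (f' i t) (f' j t)
  set T : Fin n → Fin n → ℕ → ℝ :=
    fun i j k => ∫ t in Icc (z k) (z (k+1)), ‖f' i t - f' j t‖^2 with hT_def
  have hT0 : ∀ i j k, 0 ≤ T i j k := fun i j k => integral_nonneg fun t => sq_nonneg _
  clear_value T
  set d : Fin n → Fin n → ℕ → ℝ := fun i j k => Real.sqrt (ε * T i j k) with hd_def
  have hd0 : ∀ i j k, 0 ≤ d i j k := fun i j k => Real.sqrt_nonneg _
  have hdsq : ∀ i j k, (d i j k)^2 = ε * T i j k :=
    fun i j k => Real.sq_sqrt (mul_nonneg hε.le (hT0 i j k))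
  clear_value d
  -- sum of T over k
  have hTsum : ∀ i j : Fin n, ∑ k ∈ Finset.range N, T i j k ≤ S := by
    intro i j
    have hti : ∀ k, k < N →
        IntervalIntegrable (fun t => ‖f' i t - f' j t‖^2) volume (z k) (z (k+1)) := by
      intro k hk
      refine IntegrableOn.intervalIntegrable ?_
      rw [uIcc_of_le (hzsucc k)]
      exact (hh2 i j).mono_set (hIccsub k hk)
    have e : ∀ k ∈ Finset.range N,
        T i j k = ∫ t in (z k)..(z (k+1)), ‖f' i t - f' j t‖^2 := by
      intro k _
      simp only [hT_def]
      rw [intervalIntegral.integral_of_le (hzsucc k),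
        MeasureTheory.integral_Icc_eq_integral_Ioc]
    rw [Finset.sum_congr rfl e, intervalIntegral.sum_integral_adjacent_intervals hti, hz0, hzN]
    have hii : IntervalIntegrable (fun t => ‖f' i t - f' j t‖^2) volume 0 L := by
      refine IntegrableOn.intervalIntegrable ?_
      rw [uIcc_of_le hL.le]; exact hh2 i j
    have hjj : IntervalIntegrable (fun t => 2*‖f' i t‖^2 + 2*‖f' j t‖^2) volume 0 L := by
      refine IntegrableOn.intervalIntegrable ?_
      rw [uIcc_of_le hL.le]
      exact ((hInt2 i).const_mul 2).add ((hInt2 j).const_mul 2)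
    have hmono : ∫ t in (0:ℝ)..L, ‖f' i t - f' j t‖^2
        ≤ ∫ t in (0:ℝ)..L, (2*‖f' i t‖^2 + 2*‖f' j t‖^2) := by
      refine intervalIntegral.integral_mono_on hL.le hii hjj fun t _ => ?_
      exact normsq_sub_le (f' i t) (f' j t)
    have hsplit : ∫ t in (0:ℝ)..L, (2*‖f' i t‖^2 + 2*‖f' j t‖^2) = 2 * A i + 2 * A j := by
      have h2i : IntervalIntegrable (fun t => 2*‖f' i t‖^2) volume 0 L := by
        refine IntegrableOn.intervalIntegrable ?_
        rw [uIcc_of_le hL.le]; exact (hInt2 i).const_mul 2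
      have h2j : IntervalIntegrable (fun t => 2*‖f' j t‖^2) volume 0 L := by
        refine IntegrableOn.intervalIntegrable ?_
        rw [uIcc_of_le hL.le]; exact (hInt2 j).const_mul 2
      rw [intervalIntegral.integral_add h2i h2j, hA_def,
        intervalIntegral.integral_const_mul, intervalIntegral.integral_const_mul]
    have hle : A i ≤ ∑ m, A m := Finset.single_le_sum (fun m _ => hA m) (Finset.mem_univ i)
    have hle' : A j ≤ ∑ m, A m := Finset.single_le_sum (fun m _ => hA m) (Finset.mem_univ j)
    rw [hS_def]
    calc ∫ t in (0:ℝ)..L, ‖f' i t - f' j t‖^2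
        ≤ 2 * A i + 2 * A j := by rw [← hsplit]; exact hmono
      _ ≤ 4 * (∑ m, A m) + 1 := by linarith
  -- the bad set
  set cc : Fin n → Fin n → ℝ := fun i j => ((i:ℕ):ℝ) - ((j:ℕ):ℝ) with hcc_def
  set center : Fin n → Fin n → ℕ → EuclideanSpace ℝ (Fin 2) :=
    fun i j k => (-(cc i j)⁻¹) • (f i (z k) - f j (z k)) with hcenter_def
  clear_value center
  set Bad : Set (EuclideanSpace ℝ (Fin 2)) :=
    ⋃ p : Fin n × Fin n × Fin N,
      Metric.ball (center p.1 p.2.1 (p.2.2 : ℕ)) (δ + d p.1 p.2.1 (p.2.2 : ℕ)) with hBad_def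
  clear_value Bad
  set B := volume (Metric.ball (0 : EuclideanSpace ℝ (Fin 2)) 1) with hB_def
  have hB0 : B ≠ 0 := (measure_ball_pos _ _ one_pos).ne'
  have hBtop : B ≠ ⊤ := measure_ball_lt_top.ne
  clear_value B
  -- real sum bound
  have hsum_bound : ∑ p : Fin n × Fin n × Fin N,
      (δ + d p.1 p.2.1 (p.2.2 : ℕ))^2 ≤ C * δ := by
    have inner : ∀ i j : Fin n, ∑ k : Fin N, (δ + d i j (k:ℕ))^2 ≤ (4*Q + 2) * δ := by
      intro i j
      have e1 : ∑ k : Fin N, (δ + d i j (k:ℕ))^2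
          = ∑ k ∈ Finset.range N, (δ + d i j k)^2 :=
        Fin.sum_univ_eq_sum_range (fun k => (δ + d i j k)^2) N
      have e2 : ∑ k ∈ Finset.range N, (δ + d i j k)^2
          ≤ ∑ k ∈ Finset.range N, (2*δ^2 + 2*(ε * T i j k)) := by
        refine Finset.sum_le_sum fun k _ => ?_
        have := hdsq i j k
        nlinarith [sq_nonneg (δ - d i j k), hd0 i j k]
      have e3 : ∑ k ∈ Finset.range N, (2*δ^2 + 2*(ε * T i j k))
          = (N:ℝ) * (2*δ^2) + 2*ε*(∑ k ∈ Finset.range N, T i j k) := by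
        rw [Finset.sum_add_distrib, Finset.sum_const, Finset.card_range, nsmul_eq_mul]
        congr 1
        rw [Finset.mul_sum]
        exact Finset.sum_congr rfl fun k _ => by ring
      have e4 : 2*ε*(∑ k ∈ Finset.range N, T i j k) ≤ 2 * (δ * Q) := by
        have h6 : Q ≤ δ * N := by
          rw [div_le_iff₀ hδ] at hNge; linarith [hNge]
        have h7 : ε ≤ L * δ / Q := by
          rw [hε_def, div_le_div_iff₀ hNR hQ]
          nlinarith [hL.le, hδ.le]
        have h8 : L * δ / Q * S = δ * Q := by
          rw [div_mul_eq_mul_div, div_eq_iff hQ.ne']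
          nlinarith [hQ2]
        have h5 : ε * S ≤ δ * Q := by
          nlinarith [mul_le_mul_of_nonneg_right h7 hS0.le]
        have h9 : ε * (∑ k ∈ Finset.range N, T i j k) ≤ ε * S :=
          mul_le_mul_of_nonneg_left (hTsum i j) hε.le
        nlinarith
      have hNδ : (N:ℝ)*δ ≤ Q + δ := by
        have h10 := mul_le_mul_of_nonneg_right hNle hδ.le
        rwa [add_mul, div_mul_cancel₀ _ hδ.ne', one_mul] at h10
      have e5 : (N:ℝ) * (2*δ^2) ≤ 2*(δ*Q) + 2*δ^2 := by
        nlinarith [mul_le_mul_of_nonneg_left hNδ (by positivity : (0:ℝ) ≤ 2*δ)]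
      have e6 : δ^2 ≤ δ := by nlinarith
      calc ∑ k : Fin N, (δ + d i j (k:ℕ))^2
          = ∑ k ∈ Finset.range N, (δ + d i j k)^2 := e1
        _ ≤ (N:ℝ) * (2*δ^2) + 2*ε*(∑ k ∈ Finset.range N, T i j k) := by
            rw [← e3]; exact e2
        _ ≤ 2*(δ*Q) + 2*δ^2 + 2*(δ*Q) := by linarith
        _ ≤ (4*Q + 2) * δ := by nlinarith
    calc ∑ p : Fin n × Fin n × Fin N, (δ + d p.1 p.2.1 (p.2.2 : ℕ))^2
        = ∑ i : Fin n, ∑ q : Fin n × Fin N, (δ + d i q.1 (q.2 : ℕ))^2 := by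
          rw [Fintype.sum_prod_type]
      _ = ∑ i : Fin n, ∑ j : Fin n, ∑ k : Fin N, (δ + d i j (k:ℕ))^2 := by
          refine Finset.sum_congr rfl fun i _ => ?_
          rw [Fintype.sum_prod_type]
      _ ≤ ∑ _i : Fin n, ∑ _j : Fin n, (4*Q + 2) * δ := by
          refine Finset.sum_le_sum fun i _ => Finset.sum_le_sum fun j _ => inner i j
      _ = C * δ := by
          simp only [Finset.sum_const, Finset.card_univ, Fintype.card_fin, nsmul_eq_mul,
            hC_def]
          ring
  -- measure of Bad
  have hμBad : volume Bad ≤ ENNReal.ofReal (C * δ) * B := by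
    rw [hBad_def]
    calc volume (⋃ p : Fin n × Fin n × Fin N,
            Metric.ball (center p.1 p.2.1 (p.2.2 : ℕ)) (δ + d p.1 p.2.1 (p.2.2 : ℕ)))
        ≤ ∑' p : Fin n × Fin n × Fin N,
            volume (Metric.ball (center p.1 p.2.1 (p.2.2 : ℕ)) (δ + d p.1 p.2.1 (p.2.2 : ℕ))) :=
          measure_iUnion_le _
      _ = ∑ p : Fin n × Fin n × Fin N,
            volume (Metric.ball (center p.1 p.2.1 (p.2.2 : ℕ)) (δ + d p.1 p.2.1 (p.2.2 : ℕ))) :=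
          tsum_fintype _
      _ = ∑ p : Fin n × Fin n × Fin N,
            ENNReal.ofReal ((δ + d p.1 p.2.1 (p.2.2 : ℕ))^2) * B := by
          refine Finset.sum_congr rfl fun p _ => ?_
          rw [hB_def, Measure.addHaar_ball volume _
            (add_nonneg hδ.le (hd0 p.1 p.2.1 (p.2.2:ℕ))),
            finrank_euclideanSpace_fin]
      _ = ENNReal.ofReal (∑ p : Fin n × Fin n × Fin N, (δ + d p.1 p.2.1 (p.2.2 : ℕ))^2) * B := by
          rw [← Finset.sum_mul, ← ENNReal.ofReal_sum_of_nonneg fun p _ => sq_nonneg _]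
      _ ≤ ENNReal.ofReal (C * δ) * B :=
          mul_le_mul_left (ENNReal.ofReal_le_ofReal hsum_bound) B
  have hμgood : volume (Metric.ball (0 : EuclideanSpace ℝ (Fin 2)) ρ)
      = ENNReal.ofReal (ρ^2) * B := by
    rw [hB_def, Measure.addHaar_ball volume _ hρ.le, finrank_euclideanSpace_fin]
  have hlt : volume Bad < volume (Metric.ball (0 : EuclideanSpace ℝ (Fin 2)) ρ) := by
    rw [hμgood]
    refine lt_of_le_of_lt hμBad ?_
    refine ENNReal.mul_lt_mul_left hB0 hBtop ?_
    exact (ENNReal.ofReal_lt_ofReal_iff (by positivity)).2 hkey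
  have hnsub : ¬ Metric.ball (0 : EuclideanSpace ℝ (Fin 2)) ρ ⊆ Bad := by
    intro hsub
    exact absurd (measure_mono hsub) (not_le.2 hlt)
  obtain ⟨b, hbmem, hbBad⟩ := Set.not_subset.1 hnsub
  have hbnorm : ‖b‖ < ρ := by rwa [Metric.mem_ball, dist_zero_right] at hbmem
  rw [hBad_def] at hbBad
  refine ⟨fun i => (((i:ℕ):ℝ)) • b, ?_, ?_⟩
  · intro i
    rw [norm_smul, Real.norm_eq_abs, abs_of_nonneg (by positivity : (0:ℝ) ≤ ((i:ℕ):ℝ))]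
    have h1 : ((i:ℕ):ℝ) ≤ (n:ℝ) := by exact_mod_cast (i.isLt).le
    have h2 : ((i:ℕ):ℝ) * ‖b‖ ≤ (n:ℝ) * ρ :=
      mul_le_mul h1 hbnorm.le (norm_nonneg _) hnR.le
    have h3 : (n:ℝ) * ρ = δ ^ ((1:ℝ)/3) := by
      rw [hρ_def]; field_simp
    linarith
  · intro z₀ hz₀ i j hij
    by_contra hcon
    push_neg at hcon
    -- find the interval index
    set k := ⌊z₀ / ε⌋₊ with hk_def
    have hz₀pos := hz₀.1
    have hz₀lt := hz₀.2
    have hkN : k < N := by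
      rw [hk_def, Nat.floor_lt (by positivity)]
      rw [div_lt_iff₀ hε]
      calc z₀ < L := hz₀lt
        _ = (N:ℝ) * ε := hNεL.symm
    have hzk_le : z k ≤ z₀ := by
      have h0 := Nat.floor_le (show (0:ℝ) ≤ z₀ / ε by positivity)
      rw [← hk_def] at h0
      rw [hz_def]
      calc (k:ℝ) * ε ≤ (z₀ / ε) * ε := mul_le_mul_of_nonneg_right h0 hε.le
        _ = z₀ := by field_simp
    have hz_le : z₀ ≤ z (k+1) := by
      have h0 := Nat.lt_floor_add_one (z₀ / ε)
      rw [← hk_def] at h0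
      have h2 : z₀ / ε * ε < ((k:ℝ) + 1) * ε := mul_lt_mul_of_pos_right h0 hε
      rw [div_mul_cancel₀ _ hε.ne'] at h2
      rw [hz_def]; push_cast; linarith
    clear_value k
    have hmemk : z k ∈ Icc 0 L := hzmem k hkN.le
    have hmemk1 : z (k+1) ∈ Icc 0 L := hzmem (k+1) hkN
    have hmemz : z₀ ∈ Icc 0 L := ⟨hz₀pos.le, hz₀lt.le⟩
    -- FTC for the difference
    have hienti : IntervalIntegrable (f' i) volume (z k) z₀ := by
      refine IntegrableOn.intervalIntegrable ?_
      rw [uIcc_of_le hzk_le]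
      exact (hInt1 i).mono_set (Icc_subset_Icc hmemk.1 hmemz.2)
    have hientj : IntervalIntegrable (f' j) volume (z k) z₀ := by
      refine IntegrableOn.intervalIntegrable ?_
      rw [uIcc_of_le hzk_le]
      exact (hInt1 j).mono_set (Icc_subset_Icc hmemk.1 hmemz.2)
    have key1 : (f i z₀ - f j z₀) - (f i (z k) - f j (z k))
        = ∫ t in (z k)..z₀, (f' i t - f' j t) := by
      rw [intervalIntegral.integral_sub hienti hientj,
        ← hFTC i (z k) hmemk z₀ hmemz, ← hFTC j (z k) hmemk z₀ hmemz]
      abel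
    have hIccs : Icc (z k) (z (k+1)) ⊆ Icc 0 L := Icc_subset_Icc hmemk.1 hmemk1.2
    have key2 : ‖(f i z₀ - f j z₀) - (f i (z k) - f j (z k))‖ ≤ d i j k := by
      rw [key1]
      have hb1 := (hh1 i j).mono_set hIccs
      have hb2 := (hh2 i j).mono_set hIccs
      have hseg := seg_bound hzk_le hz_le hb1 hb2
      rw [hd_def]
      simp only [hT_def]
      have heq : ε * ((fun i j k => ∫ t in Icc (z k) (z (k+1)), ‖f' i t - f' j t‖^2) i j k)
          = (z (k+1) - z k) * ∫ t in Icc (z k) (z (k+1)), ‖f' i t - f' j t‖^2 := by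
        simp only
        rw [hzd k]
      rw [heq]
      exact hseg
    -- algebra of c
    have hvne : (i:ℕ) ≠ (j:ℕ) := fun h => hij (Fin.ext h)
    have hcc1 : 1 ≤ |cc i j| := by
      have h2 : ((i:ℕ):ℤ) ≠ ((j:ℕ):ℤ) := by exact_mod_cast hvne
      have h3 : 1 ≤ |((i:ℕ):ℤ) - ((j:ℕ):ℤ)| := Int.one_le_abs (sub_ne_zero.2 h2)
      have h4 : (1:ℝ) ≤ |((i:ℕ):ℝ) - ((j:ℕ):ℝ)| := by
        calc (1:ℝ) = ((1:ℤ):ℝ) := by norm_num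
          _ ≤ ((|((i:ℕ):ℤ) - ((j:ℕ):ℤ)| : ℤ):ℝ) := by exact_mod_cast h3
          _ = |((i:ℕ):ℝ) - ((j:ℕ):ℝ)| := by push_cast; ring
      rw [hcc_def]
      exact h4
    have hccne : cc i j ≠ 0 := by
      intro h; rw [h, abs_zero] at hcc1; linarith
    have hvec : (f i z₀ + ((i:ℕ):ℝ) • b) - (f j z₀ + ((j:ℕ):ℝ) • b)
        = (f i z₀ - f j z₀) + cc i j • b := by
      rw [hcc_def]
      simp only
      rw [sub_smul]; abel
    -- b is in the bad ball
    have hdist : dist b (center i j k) < δ + d i j k := by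
      rw [dist_eq_norm]
      have e : b - center i j k
          = (cc i j)⁻¹ • ((f i (z k) - f j (z k)) + cc i j • b) := by
        rw [hcenter_def]
        simp only
        rw [smul_add, smul_smul, inv_mul_cancel₀ hccne, one_smul, neg_smul, sub_neg_eq_add]
        abel
      rw [e, norm_smul, norm_inv, Real.norm_eq_abs]
      have htri : ‖(f i (z k) - f j (z k)) + cc i j • b‖
          ≤ ‖(f i z₀ - f j z₀) + cc i j • b‖
            + ‖(f i z₀ - f j z₀) - (f i (z k) - f j (z k))‖ := by
        have e2 : (f i (z k) - f j (z k)) + cc i j • b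
            = ((f i z₀ - f j z₀) + cc i j • b)
              - ((f i z₀ - f j z₀) - (f i (z k) - f j (z k))) := by abel
        rw [e2]
        exact norm_sub_le _ _
      have hδb : ‖(f i z₀ - f j z₀) + cc i j • b‖ < δ := by rw [← hvec]; exact hcon
      have hfull : ‖(f i (z k) - f j (z k)) + cc i j • b‖ < δ + d i j k := by
        linarith [key2, htri, hδb]
      calc |cc i j|⁻¹ * ‖(f i (z k) - f j (z k)) + cc i j • b‖
          ≤ 1 * ‖(f i (z k) - f j (z k)) + cc i j • b‖ := by
            refine mul_le_mul_of_nonneg_right ?_ (norm_nonneg _)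
            rw [inv_le_one_iff₀]
            right; exact hcc1
        _ < δ + d i j k := by rw [one_mul]; exact hfull
    exact hbBad (Set.mem_iUnion.2 ⟨⟨i, j, ⟨k, hkN⟩⟩, Metric.mem_ball.2 hdist⟩)
end

section
/- Let μ be a finite nonnegative Borel measure on (0,L) and let f : (0,L) → ℝ^d be a function such that for every 0 < z < z' < L, |f(z) - f(z')|² / (z' - z) ≤ μ((z, z')). Then f extends to a continuous function on [0,L], belongs to H¹((0,L); ℝ^d), and satisfies ∫_z^{z'} |f'(t)|² dt ≤ μ((z, z')) for all 0 ≤ z < z' ≤ L. -/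
open MeasureTheory Set Filter
open scoped ENNReal Topology
set_option linter.unusedSectionVars false

noncomputable section Stmt17Aux

local notation "⟪" x ", " y "⟫" => @inner ℝ _ _ x y

variable {E : Type*} [NormedAddCommGroup E] [InnerProductSpace ℝ E] [CompleteSpace E]

/-- dyadic grid points -/
def pt (L : ℝ) (n j : ℕ) : ℝ := L * j / 2 ^ n

/-- slope on cell `j` of level `n` -/
def vstep (L : ℝ) (f : ℝ → E) (n j : ℕ) : E :=
  (2 ^ n / L) • (f (pt L n (j + 1)) - f (pt L n j))

/-- level-`n` piecewise constant difference quotient -/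
def gna (L : ℝ) (f : ℝ → E) (n : ℕ) : ℝ → E := fun t =>
  ∑ j ∈ Finset.Ico 1 (2 ^ n - 1),
    (Ioo (pt L n j) (pt L n (j + 1))).indicator (fun _ => vstep L f n j) t

variable {L : ℝ} {f : ℝ → E}

lemma pt_zero (n : ℕ) : pt L n 0 = 0 := by simp [pt]

lemma pt_top (n : ℕ) : pt L n (2 ^ n) = L := by
  unfold pt
  push_cast
  field_simp

lemma pt_strictMono (hL : 0 < L) (n : ℕ) : StrictMono (pt L n) := by
  intro j k hjk
  have h2 : (0:ℝ) < 2 ^ n := by positivity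
  unfold pt
  rw [div_lt_div_iff_of_pos_right h2]
  exact mul_lt_mul_of_pos_left (by exact_mod_cast hjk) hL

lemma pt_mono (hL : 0 < L) (n : ℕ) : Monotone (pt L n) := (pt_strictMono hL n).monotone

lemma pt_succ_sub (n j : ℕ) : pt L n (j + 1) - pt L n j = L / 2 ^ n := by
  unfold pt
  push_cast
  ring

lemma pt_mem (hL : 0 < L) {n j : ℕ} (h1 : 1 ≤ j) (h2 : j ≤ 2 ^ n - 1) : pt L n j ∈ Ioo 0 L := by
  have hpow : 1 ≤ 2 ^ n := Nat.one_le_two_pow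
  constructor
  · have := pt_strictMono hL n (show 0 < j from h1)
    rwa [pt_zero] at this
  · have hlt : j < 2 ^ n := lt_of_le_of_lt h2 (by omega)
    have := pt_strictMono hL n hlt
    rwa [pt_top] at this

lemma Ioo_pt_subset (hL : 0 < L) {n j k : ℕ} (h1 : 1 ≤ j) (hjk : j ≤ k) (h2 : k ≤ 2 ^ n - 1) :
    Ioo (pt L n j) (pt L n k) ⊆ Ioo (0:ℝ) L :=
  Ioo_subset_Ioo (pt_mem hL h1 (hjk.trans h2)).1.le (pt_mem hL (h1.trans hjk) h2).2.le

lemma pt_scale {n m : ℕ} (hnm : n ≤ m) (j : ℕ) : pt L n j = pt L m (j * 2 ^ (m - n)) := by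
  unfold pt
  have h2 : (2:ℝ) ^ m = 2 ^ n * 2 ^ (m - n) := by
    rw [← pow_add, Nat.add_sub_cancel' hnm]
  push_cast
  rw [h2]
  have hn : (2:ℝ) ^ n ≠ 0 := by positivity
  have hmn : (2:ℝ) ^ (m - n) ≠ 0 := by positivity
  field_simp

lemma idx_scale_one {n m j : ℕ} (h1 : 1 ≤ j) : 1 ≤ j * 2 ^ (m - n) :=
  Nat.one_le_iff_ne_zero.2 (by positivity)

lemma idx_scale_top {n m j : ℕ} (hnm : n ≤ m) (h2 : j ≤ 2 ^ n - 1) :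
    j * 2 ^ (m - n) ≤ 2 ^ m - 1 := by
  have h := Nat.mul_le_mul_right (2 ^ (m - n)) h2
  have hpow : 2 ^ n * 2 ^ (m - n) = 2 ^ m := by
    rw [← pow_add, Nat.add_sub_cancel' hnm]
  have h1 : 1 ≤ 2 ^ (m - n) := Nat.one_le_two_pow
  have h1n : 1 ≤ 2 ^ n := Nat.one_le_two_pow
  calc j * 2 ^ (m - n) ≤ (2 ^ n - 1) * 2 ^ (m - n) := h
    _ = 2 ^ m - 2 ^ (m - n) := by rw [Nat.sub_mul, one_mul, hpow]
    _ ≤ 2 ^ m - 1 := by omega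

lemma gna_memℒp (L : ℝ) (f : ℝ → E) (n : ℕ) (p : ℝ≥0∞) {ν : Measure ℝ}
    (hν : ν ≤ volume) : MemLp (gna L f n) p ν := by
  apply memLp_finset_sum
  intro j _
  refine memLp_indicator_const p measurableSet_Ioo _ (Or.inr ?_)
  exact ne_top_of_le_ne_top (by simp [Real.volume_Ioo]) (hν _)

lemma gna_integrable (L : ℝ) (f : ℝ → E) (n : ℕ) : Integrable (gna L f n) volume :=
  memLp_one_iff_integrable.1 (gna_memℒp L f n 1 le_rfl)

/-- volume of the intersection of a cell with a window of grid intervals -/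
lemma cell_inter_window (hL : 0 < L) {n i j k : ℕ} (hjk : j ≤ k) :
    Ioo (pt L n j) (pt L n k) ∩ Ioo (pt L n i) (pt L n (i + 1)) =
      if j ≤ i ∧ i + 1 ≤ k then Ioo (pt L n i) (pt L n (i + 1)) else ∅ := by
  split_ifs with hcase
  · rw [inter_eq_self_of_subset_right]
    exact Ioo_subset_Ioo (pt_mono hL n hcase.1) (pt_mono hL n hcase.2)
  · rw [Ioo_inter_Ioo]
    apply Ioo_eq_empty
    rw [not_and_or] at hcase
    push_neg at hcase
    rcases hcase with hc | hc
    · -- i < j, so i + 1 ≤ j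
      intro hlt
      have h1 : min (pt L n k) (pt L n (i+1)) ≤ pt L n (i+1) := min_le_right _ _
      have h2 : pt L n j ≤ max (pt L n j) (pt L n i) := le_max_left _ _
      have : pt L n (i+1) ≤ pt L n j := pt_mono hL n (by omega)
      exact absurd (lt_of_le_of_lt (this.trans h2) (lt_of_lt_of_le hlt h1)) (lt_irrefl _)
    · -- k ≤ i
      intro hlt
      have h1 : min (pt L n k) (pt L n (i+1)) ≤ pt L n k := min_le_left _ _
      have h2 : pt L n i ≤ max (pt L n j) (pt L n i) := le_max_right _ _
      have : pt L n k ≤ pt L n i := pt_mono hL n (by omega : k ≤ i)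
      exact absurd (lt_of_le_of_lt (this.trans h2) (lt_of_lt_of_le hlt h1)) (lt_irrefl _)

/-- telescoping: integral of `gna` over a window of grid intervals -/
lemma integral_gna (hL : 0 < L) (f : ℝ → E) {n j k : ℕ} (h1 : 1 ≤ j) (hjk : j ≤ k)
    (h2 : k ≤ 2 ^ n - 1) :
    ∫ t in Ioo (pt L n j) (pt L n k), gna L f n t = f (pt L n k) - f (pt L n j) := by
  set s := Ioo (pt L n j) (pt L n k) with hs
  have hmeas : ∀ i : ℕ, MeasurableSet (Ioo (pt L n i) (pt L n (i + 1))) :=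
    fun i => measurableSet_Ioo
  have hstep : ∀ i : ℕ, i ∈ Finset.Ico j k →
      ∫ t in s, (Ioo (pt L n i) (pt L n (i+1))).indicator (fun _ => vstep L f n i) t
        = f (pt L n (i+1)) - f (pt L n i) := by
    intro i hi
    rw [Finset.mem_Ico] at hi
    rw [setIntegral_indicator (hmeas i), cell_inter_window hL hjk, if_pos ⟨hi.1, hi.2⟩,
      setIntegral_const, Real.volume_real_Ioo, pt_succ_sub,
      max_eq_left (by positivity), vstep, smul_smul]
    rw [div_mul_div_comm]
    rw [show L * 2 ^ n / (2 ^ n * L) = 1 by field_simp]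
    rw [one_smul]
  have hzero : ∀ i : ℕ, i ∈ Finset.Ico 1 (2 ^ n - 1) → i ∉ Finset.Ico j k →
      ∫ t in s, (Ioo (pt L n i) (pt L n (i+1))).indicator (fun _ => vstep L f n i) t = 0 := by
    intro i _ hi
    rw [Finset.mem_Ico, not_and_or] at hi
    push_neg at hi
    have hcond : ¬ (j ≤ i ∧ i + 1 ≤ k) := by omega
    rw [setIntegral_indicator (hmeas i), cell_inter_window hL hjk, if_neg hcond,
      Measure.restrict_empty, integral_zero_measure]
  have hsub : Finset.Ico j k ⊆ Finset.Ico 1 (2 ^ n - 1) := by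
    intro i hi
    rw [Finset.mem_Ico] at hi ⊢
    omega
  calc ∫ t in s, gna L f n t
      = ∑ i ∈ Finset.Ico 1 (2 ^ n - 1),
          ∫ t in s, (Ioo (pt L n i) (pt L n (i+1))).indicator (fun _ => vstep L f n i) t := by
        exact integral_finset_sum _ (fun i _ =>
          (((integrable_indicator_iff (hmeas i)).2
            (integrableOn_const (by simp [Real.volume_Ioo]))).integrableOn))
    _ = ∑ i ∈ Finset.Ico j k,
          ∫ t in s, (Ioo (pt L n i) (pt L n (i+1))).indicator (fun _ => vstep L f n i) t :=
        (Finset.sum_subset hsub (fun i hi hni => hzero i hi hni)).symm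
    _ = ∑ i ∈ Finset.Ico j k, (f (pt L n (i+1)) - f (pt L n i)) :=
        Finset.sum_congr rfl hstep
    _ = f (pt L n k) - f (pt L n j) := by
        rw [Finset.sum_Ico_eq_sub _ hjk, Finset.sum_range_sub (fun i => f (pt L n i)),
          Finset.sum_range_sub (fun i => f (pt L n i))]
        abel

/-- telescoping at a finer level over a coarse window -/
lemma integral_gna' (hL : 0 < L) (f : ℝ → E) {n m j k : ℕ} (hnm : n ≤ m) (h1 : 1 ≤ j)
    (hjk : j ≤ k) (h2 : k ≤ 2 ^ n - 1) :
    ∫ t in Ioo (pt L n j) (pt L n k), gna L f m t = f (pt L n k) - f (pt L n j) := by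
  rw [pt_scale hnm j, pt_scale hnm k]
  exact integral_gna hL f (idx_scale_one h1) (Nat.mul_le_mul_right _ hjk)
    (idx_scale_top hnm h2)

/-- expansion of the inner product integral over a window -/
lemma integral_inner_gna (hL : 0 < L) (f : ℝ → E) {n m j k : ℕ} (hnm : n ≤ m)
    (hjk : j ≤ k) :
    ∫ t in Ioo (pt L n j) (pt L n k), ⟪gna L f m t, gna L f n t⟫ =
      ∑ i ∈ Finset.Ico 1 (2 ^ n - 1) ∩ Finset.Ico j k,
        ⟪f (pt L n (i+1)) - f (pt L n i), vstep L f n i⟫ := by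
  set s := Ioo (pt L n j) (pt L n k) with hs
  have hpt : ∀ t, ⟪gna L f m t, gna L f n t⟫ =
      ∑ i ∈ Finset.Ico 1 (2 ^ n - 1),
        (Ioo (pt L n i) (pt L n (i+1))).indicator
          (fun u => ⟪gna L f m u, vstep L f n i⟫) t := by
    intro t
    rw [show gna L f n t = ∑ i ∈ Finset.Ico 1 (2 ^ n - 1),
        (Ioo (pt L n i) (pt L n (i+1))).indicator (fun _ => vstep L f n i) t from rfl,
      inner_sum]
    refine Finset.sum_congr rfl fun i _ => ?_
    by_cases ht : t ∈ Ioo (pt L n i) (pt L n (i+1))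
    · simp [Set.indicator_of_mem ht]
    · simp [Set.indicator_of_notMem ht]
  have hint : ∀ i : ℕ, Integrable
      ((Ioo (pt L n i) (pt L n (i+1))).indicator
        (fun u => ⟪gna L f m u, vstep L f n i⟫)) (volume.restrict s) := by
    intro i
    exact (((gna_integrable L f m).inner_const (vstep L f n i)).restrict.indicator
      measurableSet_Ioo)
  calc ∫ t in s, ⟪gna L f m t, gna L f n t⟫
      = ∫ t in s, ∑ i ∈ Finset.Ico 1 (2 ^ n - 1),
          (Ioo (pt L n i) (pt L n (i+1))).indicator
            (fun u => ⟪gna L f m u, vstep L f n i⟫) t := by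
        simp only [hpt]
    _ = ∑ i ∈ Finset.Ico 1 (2 ^ n - 1), ∫ t in s,
          (Ioo (pt L n i) (pt L n (i+1))).indicator
            (fun u => ⟪gna L f m u, vstep L f n i⟫) t :=
        integral_finset_sum _ (fun i _ => hint i)
    _ = ∑ i ∈ Finset.Ico 1 (2 ^ n - 1),
          (if i ∈ Finset.Ico j k
            then ⟪f (pt L n (i+1)) - f (pt L n i), vstep L f n i⟫ else 0) := by
        refine Finset.sum_congr rfl fun i hi => ?_
        rw [Finset.mem_Ico] at hi
        rw [setIntegral_indicator measurableSet_Ioo, cell_inter_window hL hjk]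
        by_cases hwin : i ∈ Finset.Ico j k
        · rw [Finset.mem_Ico] at hwin
          rw [if_pos ⟨hwin.1, hwin.2⟩, if_pos (Finset.mem_Ico.2 hwin)]
          have hIm : Integrable (gna L f m)
              (volume.restrict (Ioo (pt L n i) (pt L n (i+1)))) :=
            (gna_integrable L f m).restrict
          have hflip : ∫ x in Ioo (pt L n i) (pt L n (i+1)),
              ⟪gna L f m x, vstep L f n i⟫ =
              ⟪vstep L f n i, ∫ x in Ioo (pt L n i) (pt L n (i+1)), gna L f m x⟫ := by
            rw [← integral_inner hIm]
            exact integral_congr_ae (Filter.Eventually.of_forall fun x => real_inner_comm _ _)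
          rw [hflip, integral_gna' hL f hnm (by omega : 1 ≤ i) (by omega)
            (by omega : i + 1 ≤ 2 ^ n - 1), real_inner_comm]
        · rw [Finset.mem_Ico] at hwin
          rw [if_neg (by omega), Measure.restrict_empty, integral_zero_measure,
            if_neg (by rw [Finset.mem_Ico]; omega)]
    _ = ∑ i ∈ Finset.Ico 1 (2 ^ n - 1) ∩ Finset.Ico j k,
          ⟪f (pt L n (i+1)) - f (pt L n i), vstep L f n i⟫ := Finset.sum_ite_mem _ _ _

/-- superadditivity of the measure over consecutive open intervals -/
lemma measure_sum_Ico (μ : Measure ℝ) [IsFiniteMeasure μ] {c : ℕ → ℝ} (hc : Monotone c)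
    {j k : ℕ} (hjk : j ≤ k) :
    ∑ i ∈ Finset.Ico j k, (μ (Ioo (c i) (c (i+1)))).toReal ≤
      (μ (Ioo (c j) (c k))).toReal := by
  induction k, hjk using Nat.le_induction with
  | base => simp
  | succ k hk ih =>
    rw [Finset.sum_Ico_succ_top hk]
    have hdisj : Disjoint (Ioo (c j) (c k)) (Ioo (c k) (c (k+1))) := by
      rw [Set.disjoint_left]
      rintro t ⟨_, h1⟩ ⟨h2, _⟩
      exact absurd (h1.trans h2) (lt_irrefl _)
    have hunion : Ioo (c j) (c k) ∪ Ioo (c k) (c (k+1)) ⊆ Ioo (c j) (c (k+1)) :=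
      union_subset (Ioo_subset_Ioo_right (hc (Nat.le_succ k)))
        (Ioo_subset_Ioo_left (hc hk))
    have hmu := measure_union (μ := μ) hdisj measurableSet_Ioo
    calc (∑ i ∈ Finset.Ico j k, (μ (Ioo (c i) (c (i+1)))).toReal) +
            (μ (Ioo (c k) (c (k+1)))).toReal
        ≤ (μ (Ioo (c j) (c k))).toReal + (μ (Ioo (c k) (c (k+1)))).toReal :=
          add_le_add ih le_rfl
      _ = (μ (Ioo (c j) (c k) ∪ Ioo (c k) (c (k+1)))).toReal := by
          rw [hmu, ENNReal.toReal_add (measure_ne_top μ _) (measure_ne_top μ _)]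
      _ ≤ (μ (Ioo (c j) (c (k+1)))).toReal :=
          ENNReal.toReal_mono (measure_ne_top μ _) (measure_mono hunion)

lemma inner_vstep_le (hL : 0 < L) {μ : Measure ℝ} [IsFiniteMeasure μ] {f : ℝ → E}
    (hmul : ∀ a b : ℝ, 0 < a → a < b → b < L →
      ‖f b - f a‖^2 ≤ (b - a) * (μ (Ioo a b)).toReal)
    {n i : ℕ} (h1 : 1 ≤ i) (h2 : i + 1 ≤ 2 ^ n - 1) :
    ⟪f (pt L n (i+1)) - f (pt L n i), vstep L f n i⟫ ≤
      (μ (Ioo (pt L n i) (pt L n (i+1)))).toReal := by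
  have ha := pt_mem hL h1 (by omega : i ≤ 2 ^ n - 1)
  have hb := pt_mem hL (by omega : 1 ≤ i + 1) h2
  have hab : pt L n i < pt L n (i+1) := pt_strictMono hL n (Nat.lt_succ_self i)
  have hX := hmul _ _ ha.1 hab hb.2
  rw [pt_succ_sub] at hX
  rw [vstep, real_inner_smul_right, real_inner_self_eq_norm_sq]
  have hpos : (0:ℝ) < 2 ^ n / L := by positivity
  calc 2 ^ n / L * ‖f (pt L n (i+1)) - f (pt L n i)‖^2
      ≤ 2 ^ n / L * (L / 2 ^ n * (μ (Ioo (pt L n i) (pt L n (i+1)))).toReal) :=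
        mul_le_mul_of_nonneg_left hX hpos.le
    _ = (μ (Ioo (pt L n i) (pt L n (i+1)))).toReal := by
        field_simp

lemma sum_inner_le (hL : 0 < L) {μ : Measure ℝ} [IsFiniteMeasure μ] {f : ℝ → E}
    (hmul : ∀ a b : ℝ, 0 < a → a < b → b < L →
      ‖f b - f a‖^2 ≤ (b - a) * (μ (Ioo a b)).toReal)
    {n j k : ℕ} (h1 : 1 ≤ j) (hjk : j ≤ k) (h2 : k ≤ 2 ^ n - 1) :
    ∑ i ∈ Finset.Ico j k, ⟪f (pt L n (i+1)) - f (pt L n i), vstep L f n i⟫ ≤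
      (μ (Ioo (pt L n j) (pt L n k))).toReal := by
  refine (Finset.sum_le_sum ?_).trans
    (measure_sum_Ico μ (fun a b hab => pt_mono hL n hab) hjk)
  intro i hi
  rw [Finset.mem_Ico] at hi
  exact inner_vstep_le hL hmul (by omega) (by omega)

lemma II_of_Icc {F : Type*} [NormedAddCommGroup F] {w : ℝ → F} {c d a b : ℝ}
    (hw : IntegrableOn w (Icc c d) volume) (ha : a ∈ Icc c d) (hb : b ∈ Icc c d) :
    IntervalIntegrable w volume a b := by
  rw [intervalIntegrable_iff]
  rcases le_total a b with hab | hab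
  · rw [uIoc_of_le hab]
    exact hw.mono_set (fun t ht => ⟨ha.1.trans ht.1.le, ht.2.trans hb.2⟩)
  · rw [uIoc_comm, uIoc_of_le hab]
    exact hw.mono_set (fun t ht => ⟨hb.1.trans ht.1.le, ht.2.trans ha.2⟩)

lemma hdy_above (hL : 0 < L) {z : ℝ} (hz0 : 0 ≤ z) (hzL : z < L) {n : ℕ}
    (hn : L / 2 ^ n < L - z) :
    ∃ j : ℕ, 1 ≤ j ∧ j ≤ 2 ^ n - 1 ∧ z < pt L n j ∧ pt L n j ≤ z + L / 2 ^ n := by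
  have hpow : (0:ℝ) < 2 ^ n := by positivity
  set x := z * 2 ^ n / L with hx
  have hx0 : 0 ≤ x := by positivity
  have hxL : x * L = z * 2 ^ n := by rw [hx]; field_simp
  refine ⟨⌊x⌋₊ + 1, by omega, ?_, ?_, ?_⟩
  · have hcast : ((2 ^ n - 1 : ℕ) : ℝ) = 2 ^ n - 1 := by
      rw [Nat.cast_sub Nat.one_le_two_pow]; push_cast; ring
    have h' : L < (L - z) * 2 ^ n := by rwa [div_lt_iff₀ hpow] at hn
    have hxlt : x < ((2 ^ n - 1 : ℕ) : ℝ) := by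
      rw [hcast, div_lt_iff₀ hL]
      nlinarith
    have := (Nat.floor_lt hx0).2 hxlt
    omega
  · have hlt : x < (⌊x⌋₊ : ℝ) + 1 := Nat.lt_floor_add_one x
    rw [pt, lt_div_iff₀ hpow]
    push_cast
    nlinarith
  · have hle : (⌊x⌋₊ : ℝ) ≤ x := Nat.floor_le hx0
    have hdiv : L / 2 ^ n * 2 ^ n = L := div_mul_cancel₀ L hpow.ne'
    rw [pt, div_le_iff₀ hpow]
    push_cast
    nlinarith [hdiv, hxL, hle, hL]

lemma hdy_below (hL : 0 < L) {z' : ℝ} (hz0 : 0 < z') (hz'L : z' ≤ L) {n : ℕ}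
    (hn : L / 2 ^ n < z') :
    ∃ j : ℕ, 1 ≤ j ∧ j ≤ 2 ^ n - 1 ∧ z' - L / 2 ^ n ≤ pt L n j ∧ pt L n j ≤ z' := by
  have hpow : (0:ℝ) < 2 ^ n := by positivity
  set x := z' * 2 ^ n / L with hx
  have hx0 : 0 ≤ x := by positivity
  have hxL : x * L = z' * 2 ^ n := by rw [hx]; field_simp
  have hx1 : (1:ℝ) < x := by
    rw [hx, lt_div_iff₀ hL]
    have h' : L < z' * 2 ^ n := by rwa [div_lt_iff₀ hpow] at hn
    linarith
  have hceil2 : 2 ≤ ⌈x⌉₊ := by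
    have := Nat.lt_ceil.2 (show ((1:ℕ):ℝ) < x by exact_mod_cast hx1)
    omega
  have hceille : ⌈x⌉₊ ≤ 2 ^ n := by
    refine Nat.ceil_le.2 ?_
    rw [hx, div_le_iff₀ hL]
    push_cast
    nlinarith
  have hcast : ((⌈x⌉₊ - 1 : ℕ) : ℝ) = (⌈x⌉₊ : ℝ) - 1 := by
    rw [Nat.cast_sub (by omega)]; norm_num
  refine ⟨⌈x⌉₊ - 1, by omega, by omega, ?_, ?_⟩
  · have hle : x ≤ (⌈x⌉₊ : ℝ) := Nat.le_ceil x
    have hdiv : L / 2 ^ n * 2 ^ n = L := div_mul_cancel₀ L hpow.ne'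
    rw [pt, le_div_iff₀ hpow, hcast]
    nlinarith [hdiv, hxL, hle, hL]
  · have hlt : (⌈x⌉₊ : ℝ) < x + 1 := Nat.ceil_lt_add_one hx0
    rw [pt, div_le_iff₀ hpow, hcast]
    nlinarith

lemma normSq_toLp {ν : Measure ℝ} {w : ℝ → E} (hw : MemLp w 2 ν) :
    ‖hw.toLp w‖^2 = ∫ t, ‖w t‖^2 ∂ν := by
  rw [← real_inner_self_eq_norm_sq, L2.inner_def]
  refine integral_congr_ae ?_
  filter_upwards [hw.coeFn_toLp] with t ht
  rw [ht]
  exact real_inner_self_eq_norm_sq _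

end Stmt17Aux



/-- if `μ` is a finite measure on `(0,L)` and
`|f(z)-f(z')|²/(z'-z) ≤ μ((z,z'))` for all `0 < z < z' < L`, then `f` extends to a
continuous function `g` on `[0,L]` that belongs to `H¹((0,L);ℝ^d)` (encoded via the
FTC representation with derivative `g'` having `‖g'‖² ∈ L¹`), with
`∫_z^{z'} |g'|² ≤ μ((z,z'))` for all `0 ≤ z < z' ≤ L`. -/
theorem stmt17 (L : ℝ) (hL : 0 < L) (d : ℕ) (μ : Measure ℝ)
    [IsFiniteMeasure μ] (f : ℝ → EuclideanSpace ℝ (Fin d))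
    (h : ∀ z z' : ℝ, 0 < z → z < z' → z' < L →
        ‖f z - f z'‖^2 / (z' - z) ≤ (μ (Ioo z z')).toReal) :
    ∃ (g g' : ℝ → EuclideanSpace ℝ (Fin d)),
      ContinuousOn g (Icc 0 L) ∧
      (∀ z ∈ Ioo (0:ℝ) L, g z = f z) ∧
      IntegrableOn g' (Icc 0 L) ∧
      IntegrableOn (fun t => ‖g' t‖^2) (Icc 0 L) ∧
      (∀ z ∈ Icc (0:ℝ) L, ∀ z' ∈ Icc (0:ℝ) L,
          g z' - g z = ∫ t in z..z', g' t) ∧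
      (∀ z z' : ℝ, 0 ≤ z → z < z' → z' ≤ L →
          ∫ t in z..z', ‖g' t‖^2 ≤ (μ (Ioo z z')).toReal) := by
  classical
  have hμ₀fin : IsFiniteMeasure (volume.restrict (Ioo (0:ℝ) L)) :=
    ⟨by rw [Measure.restrict_apply_univ, Real.volume_Ioo]; exact ENNReal.ofReal_lt_top⟩
  set μ₀ := volume.restrict (Ioo (0:ℝ) L) with hμ₀def
  have hmul : ∀ a b : ℝ, 0 < a → a < b → b < L →
      ‖f b - f a‖^2 ≤ (b - a) * (μ (Ioo a b)).toReal := by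
    intro a b ha hab hb
    have h2 := h a b ha hab hb
    rw [div_le_iff₀ (by linarith)] at h2
    rw [norm_sub_rev]
    calc ‖f a - f b‖^2 ≤ (μ (Ioo a b)).toReal * (b - a) := h2
      _ = (b - a) * (μ (Ioo a b)).toReal := mul_comm _ _
  have hmem : ∀ n, MemLp (gna L f n) 2 μ₀ :=
    fun n => gna_memℒp L f n 2 Measure.restrict_le_self
  set S : ℕ → ℝ := fun n => ∑ i ∈ Finset.Ico 1 (2^n - 1),
    (inner ℝ (f (pt L n (i+1)) - f (pt L n i)) (vstep L f n i) : ℝ) with hSdef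
  have hinner_int : ∀ n m, n ≤ m →
      ∫ t, (inner ℝ (gna L f m t) (gna L f n t) : ℝ) ∂μ₀ = S n := by
    intro n m hnm
    rw [hμ₀def,
      show Ioo (0:ℝ) L = Ioo (pt L n 0) (pt L n (2^n)) by rw [pt_zero, pt_top],
      integral_inner_gna hL f hnm (Nat.zero_le _)]
    congr 1
    refine Finset.inter_eq_left.2 (fun i hi => ?_)
    rw [Finset.mem_Ico] at hi ⊢
    omega
  set G : ℕ → Lp (EuclideanSpace ℝ (Fin d)) 2 μ₀ := fun n => ((hmem n).toLp _)
    with hGdef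
  have hG_inner : ∀ n m, n ≤ m → (inner ℝ (G m) (G n) : ℝ) = S n := by
    intro n m hnm
    rw [L2.inner_def, ← hinner_int n m hnm]
    refine integral_congr_ae ?_
    filter_upwards [(hmem m).coeFn_toLp, (hmem n).coeFn_toLp] with t h1 h2
    rw [hGdef]
    simp only
    rw [h1, h2]
  have hG_normsq : ∀ n, ‖G n‖^2 = S n := fun n => by
    rw [← real_inner_self_eq_norm_sq]; exact hG_inner n n le_rfl
  have hG_sub : ∀ n m, n ≤ m → ‖G m - G n‖^2 = S m - S n := by
    intro n m hnm
    rw [norm_sub_sq_real, hG_normsq, hG_normsq, hG_inner n m hnm]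
    ring
  have hS_mono : Monotone S := fun n m hnm => by
    nlinarith [hG_sub n m hnm, sq_nonneg ‖G m - G n‖]
  have hS_bdd : ∀ n, S n ≤ (μ (Ioo 0 L)).toReal := by
    intro n
    by_cases hn : 2 ^ n - 1 ≤ 1
    · rw [hSdef]
      simp only
      rw [Finset.Ico_eq_empty (by omega), Finset.sum_empty]
      exact ENNReal.toReal_nonneg
    · push_neg at hn
      refine (sum_inner_le hL hmul le_rfl (by omega) le_rfl).trans ?_
      refine ENNReal.toReal_mono (measure_ne_top μ _) (measure_mono ?_)
      exact Ioo_pt_subset hL le_rfl (by omega) le_rfl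
  obtain ⟨Sl, hSl⟩ : ∃ l, Tendsto S atTop (𝓝 l) :=
    ⟨_, tendsto_atTop_ciSup hS_mono ⟨(μ (Ioo 0 L)).toReal, by
      rintro x ⟨n, rfl⟩; exact hS_bdd n⟩⟩
  have hG_cauchy : CauchySeq G := by
    rw [Metric.cauchySeq_iff]
    intro ε hε
    obtain ⟨N, hN⟩ := Metric.cauchySeq_iff.1 hSl.cauchySeq (ε^2) (by positivity)
    refine ⟨N, fun m hm n hn => ?_⟩
    have key : ∀ a b, N ≤ a → N ≤ b → a ≤ b → dist (G b) (G a) < ε := by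
      intro a b ha hb hab
      rw [dist_eq_norm]
      have h1 : ‖G b - G a‖^2 = S b - S a := hG_sub a b hab
      have h2 : dist (S b) (S a) < ε^2 := hN b hb a ha
      rw [Real.dist_eq] at h2
      have h3 : ‖G b - G a‖^2 < ε^2 := by
        rw [h1]; exact lt_of_le_of_lt (le_abs_self _) h2
      exact lt_of_pow_lt_pow_left₀ 2 hε.le h3
    rcases le_total m n with hmn | hnm
    · rw [dist_comm]; exact key m n hm hn hmn
    · exact key n m hn hm hnm
  obtain ⟨𝒢L, h𝒢L⟩ := cauchySeq_tendsto_of_complete hG_cauchy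
  have h𝒢mem : MemLp (⇑𝒢L) 2 μ₀ := Lp.memLp 𝒢L
  have he_fin : ∀ n, eLpNorm (gna L f n - ⇑𝒢L) 2 μ₀ ≠ ∞ :=
    fun n => ((hmem n).sub h𝒢mem).eLpNorm_ne_top
  have he0 : Tendsto (fun n => (eLpNorm (gna L f n - ⇑𝒢L) 2 μ₀).toReal) atTop (𝓝 0) := by
    have heq : ∀ n, (eLpNorm (gna L f n - ⇑𝒢L) 2 μ₀).toReal = dist (G n) 𝒢L := by
      intro n
      rw [dist_eq_norm, Lp.norm_def]
      congr 1
      refine eLpNorm_congr_ae ?_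
      filter_upwards [Lp.coeFn_sub (G n) 𝒢L, (hmem n).coeFn_toLp] with t h1 h2
      rw [Pi.sub_apply, h1, Pi.sub_apply, h2]
    rw [funext heq]
    exact tendsto_iff_dist_tendsto_zero.1 h𝒢L
  have conv1 : ∀ s : Set ℝ, MeasurableSet s → s ⊆ Ioo 0 L →
      Tendsto (fun n => ∫ t in s, gna L f n t) atTop (𝓝 (∫ t in s, (𝒢L : ℝ → EuclideanSpace ℝ (Fin d)) t)) := by
    intro s hs hssub
    have hres : μ₀.restrict s = volume.restrict s := by
      rw [hμ₀def, Measure.restrict_restrict hs, inter_eq_self_of_subset_left hssub]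
    have hresle : volume.restrict s ≤ μ₀ := hres ▸ Measure.restrict_le_self
    have h𝒢int : Integrable (⇑𝒢L) μ₀ :=
      memLp_one_iff_integrable.1 (h𝒢mem.mono_exponent one_le_two)
    rw [tendsto_iff_norm_sub_tendsto_zero]
    set C : ℝ := ((μ₀ univ) ^ (1/(1:ℝ≥0∞).toReal - 1/(2:ℝ≥0∞).toReal)).toReal with hC
    refine squeeze_zero (fun n => norm_nonneg _)
      (fun n => ?_) (by simpa using he0.mul_const C)
    set w : ℝ → EuclideanSpace ℝ (Fin d) := gna L f n - ⇑𝒢L with hw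
    have haesm : AEStronglyMeasurable w (volume.restrict s) :=
      ((hmem n).sub h𝒢mem).1.mono_measure hresle
    have hint1 : IntegrableOn (gna L f n) s volume := (gna_integrable L f n).integrableOn
    have hint2 : IntegrableOn (⇑𝒢L) s volume := by
      rw [IntegrableOn, ← hres]; exact h𝒢int.restrict
    have step1 : ‖(∫ t in s, gna L f n t) - ∫ t in s, (𝒢L : ℝ → EuclideanSpace ℝ (Fin d)) t‖
        ≤ ∫ t in s, ‖w t‖ := by
      rw [← integral_sub hint1 hint2]
      exact norm_integral_le_integral_norm _
    have step2 : ∫ t in s, ‖w t‖ ≤ (eLpNorm w 2 μ₀ * (μ₀ univ) ^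
        (1/(1:ℝ≥0∞).toReal - 1/(2:ℝ≥0∞).toReal)).toReal := by
      rw [integral_norm_eq_lintegral_enorm haesm, ← eLpNorm_one_eq_lintegral_enorm]
      refine ENNReal.toReal_mono
        (ENNReal.mul_ne_top (he_fin n) (ENNReal.rpow_ne_top_of_nonneg (by norm_num)
          (measure_ne_top μ₀ univ))) ?_
      calc eLpNorm w 1 (volume.restrict s)
          ≤ eLpNorm w 2 (volume.restrict s) * ((volume.restrict s) univ) ^
            (1/(1:ℝ≥0∞).toReal - 1/(2:ℝ≥0∞).toReal) :=
            eLpNorm_le_eLpNorm_mul_rpow_measure_univ one_le_two haesm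
        _ ≤ eLpNorm w 2 μ₀ * (μ₀ univ) ^ (1/(1:ℝ≥0∞).toReal - 1/(2:ℝ≥0∞).toReal) := by
            refine mul_le_mul' (eLpNorm_mono_measure _ hresle) ?_
            exact ENNReal.rpow_le_rpow (Measure.le_iff'.1 hresle univ) (by norm_num)
    calc ‖(∫ t in s, gna L f n t) - ∫ t in s, (𝒢L : ℝ → EuclideanSpace ℝ (Fin d)) t‖
        ≤ (eLpNorm w 2 μ₀ * (μ₀ univ) ^
            (1/(1:ℝ≥0∞).toReal - 1/(2:ℝ≥0∞).toReal)).toReal := step1.trans step2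
      _ = (eLpNorm w 2 μ₀).toReal * C := by rw [ENNReal.toReal_mul]
  have conv2 : ∀ s : Set ℝ, MeasurableSet s → s ⊆ Ioo 0 L →
      Tendsto (fun n => ∫ t in s, ‖gna L f n t‖^2) atTop
        (𝓝 (∫ t in s, ‖(𝒢L : ℝ → EuclideanSpace ℝ (Fin d)) t‖^2)) := by
    intro s hs hssub
    have hres : μ₀.restrict s = volume.restrict s := by
      rw [hμ₀def, Measure.restrict_restrict hs, inter_eq_self_of_subset_left hssub]
    have hresle : volume.restrict s ≤ μ₀ := hres ▸ Measure.restrict_le_self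
    have hwmem : ∀ n, MemLp (gna L f n) 2 (volume.restrict s) :=
      fun n => (hmem n).mono_measure hresle
    have h𝒢s : MemLp (⇑𝒢L) 2 (volume.restrict s) := h𝒢mem.mono_measure hresle
    have hA : Tendsto (fun n => (hwmem n).toLp _) atTop (𝓝 (h𝒢s.toLp _)) := by
      rw [tendsto_iff_dist_tendsto_zero]
      refine squeeze_zero (fun n => dist_nonneg) (fun n => ?_) he0
      rw [dist_eq_norm, ← MemLp.toLp_sub (hwmem n) h𝒢s, Lp.norm_toLp]
      exact ENNReal.toReal_mono (he_fin n) (eLpNorm_mono_measure _ hresle)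
    have hnorm := (hA.norm.pow 2)
    have e1 : ∀ n, ∫ t in s, ‖gna L f n t‖^2 = ‖(hwmem n).toLp _‖^2 :=
      fun n => (normSq_toLp (hwmem n)).symm
    rw [show (∫ t in s, ‖(𝒢L : ℝ → EuclideanSpace ℝ (Fin d)) t‖^2)
        = ‖h𝒢s.toLp _‖^2 from (normSq_toLp h𝒢s).symm, funext e1]
    exact hnorm
  have key1 : ∀ n j k : ℕ, 1 ≤ j → j ≤ k → k ≤ 2^n - 1 →
      ∫ t in Ioo (pt L n j) (pt L n k), (𝒢L : ℝ → EuclideanSpace ℝ (Fin d)) t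
        = f (pt L n k) - f (pt L n j) := by
    intro n j k h1 hjk h2
    rcases eq_or_lt_of_le hjk with rfl | hlt
    · rw [Ioo_self, Measure.restrict_empty, integral_zero_measure, sub_self]
    · have hsub := Ioo_pt_subset hL h1 hjk h2
      refine tendsto_nhds_unique (conv1 _ measurableSet_Ioo hsub) ?_
      refine Tendsto.congr' ?_ tendsto_const_nhds
      filter_upwards [eventually_ge_atTop n] with m hm
      exact (integral_gna' hL f hm h1 hjk h2).symm
  have key2 : ∀ n j k : ℕ, 1 ≤ j → j ≤ k → k ≤ 2^n - 1 →
      ∫ t in Ioo (pt L n j) (pt L n k), ‖(𝒢L : ℝ → EuclideanSpace ℝ (Fin d)) t‖^2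
        ≤ (μ (Ioo (pt L n j) (pt L n k))).toReal := by
    intro n j k h1 hjk h2
    rcases eq_or_lt_of_le hjk with rfl | hlt
    · rw [Ioo_self, Measure.restrict_empty, integral_zero_measure]
      exact ENNReal.toReal_nonneg
    · have hsub := Ioo_pt_subset hL h1 hjk h2
      refine le_of_tendsto (conv2 _ measurableSet_Ioo hsub) ?_
      filter_upwards [eventually_ge_atTop n] with m hm
      have h1' : 1 ≤ j * 2^(m-n) := idx_scale_one h1
      have hjk' : j * 2^(m-n) ≤ k * 2^(m-n) := Nat.mul_le_mul_right _ hjk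
      have h2' : k * 2^(m-n) ≤ 2^m - 1 := idx_scale_top hm h2
      have heq : ∫ t in Ioo (pt L n j) (pt L n k), ‖gna L f m t‖^2
          = ∑ i ∈ Finset.Ico (j*2^(m-n)) (k*2^(m-n)),
              (inner ℝ (f (pt L m (i+1)) - f (pt L m i)) (vstep L f m i) : ℝ) := by
        rw [pt_scale hm j, pt_scale hm k]
        rw [show (∫ t in Ioo (pt L m (j*2^(m-n))) (pt L m (k*2^(m-n))), ‖gna L f m t‖^2)
            = ∫ t in Ioo (pt L m (j*2^(m-n))) (pt L m (k*2^(m-n))),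
                (inner ℝ (gna L f m t) (gna L f m t) : ℝ) from
            integral_congr_ae (Eventually.of_forall
              fun t => (real_inner_self_eq_norm_sq _).symm)]
        rw [integral_inner_gna hL f le_rfl hjk']
        congr 1
        refine Finset.inter_eq_right.2 (fun i hi => ?_)
        rw [Finset.mem_Ico] at hi ⊢
        omega
      rw [heq, pt_scale hm j, pt_scale hm k]
      exact sum_inner_le hL hmul h1' hjk' h2'
  have h𝒢int1 : IntegrableOn (⇑𝒢L) (Icc 0 L) volume := by
    rw [integrableOn_Icc_iff_integrableOn_Ioo]
    have h2 : Integrable (⇑𝒢L) μ₀ :=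
      memLp_one_iff_integrable.1 (h𝒢mem.mono_exponent one_le_two)
    rw [IntegrableOn, ← hμ₀def]
    exact h2
  have h𝒢sq : IntegrableOn (fun t => ‖(𝒢L : ℝ → EuclideanSpace ℝ (Fin d)) t‖^2)
      (Icc 0 L) volume := by
    rw [integrableOn_Icc_iff_integrableOn_Ioo]
    have h2 := h𝒢mem.integrable_norm_rpow (by norm_num) (by norm_num)
    rw [IntegrableOn, ← hμ₀def]
    refine h2.congr (Eventually.of_forall fun t => ?_)
    norm_num
  have hhalfmem : L/2 ∈ Icc (0:ℝ) L := ⟨by linarith, by linarith⟩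
  set g : ℝ → EuclideanSpace ℝ (Fin d) :=
    fun z => f (L/2) + ∫ t in (L/2:ℝ)..z, (𝒢L : ℝ → EuclideanSpace ℝ (Fin d)) t with hgdef
  have hgcont : ContinuousOn g (Icc 0 L) := by
    refine continuousOn_const.add ?_
    have hcp := intervalIntegral.continuousOn_primitive_interval'
      (μ := volume) (f := (𝒢L : ℝ → EuclideanSpace ℝ (Fin d))) (a := L/2) (b₁ := 0) (b₂ := L)
      (II_of_Icc h𝒢int1 ⟨le_rfl, hL.le⟩ ⟨hL.le, le_rfl⟩)
      (by rw [uIcc_of_le hL.le]; exact hhalfmem)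
    rwa [uIcc_of_le hL.le] at hcp
  have hftc : ∀ z ∈ Icc (0:ℝ) L, ∀ z' ∈ Icc (0:ℝ) L,
      g z' - g z = ∫ t in z..z', (𝒢L : ℝ → EuclideanSpace ℝ (Fin d)) t := by
    intro z hz z' hz'
    rw [hgdef]
    simp only
    rw [add_sub_add_left_eq_sub]
    exact intervalIntegral.integral_interval_sub_left
      (II_of_Icc h𝒢int1 hhalfmem hz') (II_of_Icc h𝒢int1 hhalfmem hz)
  have hhalfn : ∀ n : ℕ, 1 ≤ n → pt L n (2^(n-1)) = L / 2 := by
    intro n hn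
    rw [pt]
    have h2 : (2:ℝ)^n = 2^(n-1) * 2 := by
      rw [← pow_succ, Nat.sub_add_cancel hn]
    push_cast
    rw [h2]
    have hne : (2:ℝ)^(n-1) ≠ 0 := by positivity
    field_simp
  have hgdy : ∀ n j : ℕ, 1 ≤ j → j ≤ 2^n - 1 → g (pt L n j) = f (pt L n j) := by
    intro n j h1 h2
    have hn1 : 1 ≤ n := by
      rcases Nat.eq_zero_or_pos n with rfl | hn
      · simp at h2; omega
      · exact hn
    have hpow : 2^(n-1) * 2 = 2^n := by rw [← pow_succ, Nat.sub_add_cancel hn1]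
    have hpow1 : 1 ≤ 2^(n-1) := Nat.one_le_two_pow
    have hj0 : pt L n (2^(n-1)) = L/2 := hhalfn n hn1
    rw [hgdef]
    simp only
    rw [show (L/2) = pt L n (2^(n-1)) from hj0.symm]
    rcases le_total (2^(n-1)) j with hcase | hcase
    · rw [intervalIntegral.integral_of_le (pt_mono hL n hcase),
        integral_Ioc_eq_integral_Ioo,
        key1 n (2^(n-1)) j hpow1 hcase h2]
      abel
    · rw [intervalIntegral.integral_symm,
        intervalIntegral.integral_of_le (pt_mono hL n hcase),
        integral_Ioc_eq_integral_Ioo,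
        key1 n j (2^(n-1)) h1 hcase (by omega)]
      abel
  have hpowtend : Tendsto (fun k : ℕ => L / 2 ^ k) atTop (𝓝 0) := by
    have h0 : Tendsto (fun k : ℕ => (1/2:ℝ)^k) atTop (𝓝 0) :=
      tendsto_pow_atTop_nhds_zero_of_lt_one (by norm_num) (by norm_num)
    have h1 := h0.const_mul L
    rw [mul_zero] at h1
    refine h1.congr fun k => ?_
    rw [div_pow, one_pow, mul_one_div]
  have harch : ∀ ε : ℝ, 0 < ε → ∃ k₀ : ℕ, L / 2 ^ k₀ < ε := by
    intro ε hε
    exact (hpowtend.eventually_lt_const hε).exists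
  have hshift : ∀ k₀ : ℕ, Tendsto (fun k : ℕ => L / 2 ^ (k + k₀)) atTop (𝓝 0) :=
    fun k₀ => hpowtend.comp (tendsto_add_atTop_nat k₀)
  have hmono2 : ∀ k k₀ : ℕ, L / 2 ^ (k + k₀) ≤ L / 2 ^ k₀ := by
    intro k k₀
    exact div_le_div_of_nonneg_left hL.le (by positivity)
      (pow_le_pow_right₀ (by norm_num) (by omega))
  have hgf : ∀ z ∈ Ioo (0:ℝ) L, g z = f z := by
    intro z hz
    obtain ⟨k₀, hk₀⟩ := harch (L - z) (by linarith [hz.2])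
    have hseq : ∀ k : ℕ, ∃ j : ℕ, 1 ≤ j ∧ j ≤ 2^(k+k₀) - 1 ∧ z < pt L (k+k₀) j ∧
        pt L (k+k₀) j ≤ z + L/2^(k+k₀) :=
      fun k => hdy_above hL hz.1.le hz.2 (lt_of_le_of_lt (hmono2 k k₀) hk₀)
    choose jj hj1 hj2 hj3 hj4 using hseq
    set a : ℕ → ℝ := fun k => pt L (k+k₀) (jj k) with hadef
    have haIoo : ∀ k, a k ∈ Ioo 0 L := fun k => pt_mem hL (hj1 k) (hj2 k)
    have hfa : ∀ k, g (a k) = f (a k) := fun k => hgdy _ _ (hj1 k) (hj2 k)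
    have hatend : Tendsto a atTop (𝓝 z) := by
      refine tendsto_of_tendsto_of_tendsto_of_le_of_le (tendsto_const_nhds)
        ?_ (fun k => (hj3 k).le) (fun k => hj4 k)
      simpa using tendsto_const_nhds.add (hshift k₀)
    have htendg : Tendsto (fun k => g (a k)) atTop (𝓝 (g z)) := by
      have hz' : z ∈ Icc (0:ℝ) L := ⟨hz.1.le, hz.2.le⟩
      exact (hgcont z hz').tendsto.comp
        (tendsto_nhdsWithin_of_tendsto_nhds_of_eventually_within a hatend
          (Eventually.of_forall fun k => Ioo_subset_Icc_self (haIoo k)))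
    have htendf : Tendsto (fun k => f (a k)) atTop (𝓝 (f z)) := by
      rw [tendsto_iff_norm_sub_tendsto_zero]
      have hbnd : ∀ k, ‖f (a k) - f z‖ ≤
          Real.sqrt ((L/2^(k+k₀)) * (μ (Ioo 0 L)).toReal) := by
        intro k
        have hmz := hmul z (a k) hz.1 (hj3 k) (haIoo k).2
        have hle2 : ‖f (a k) - f z‖^2 ≤ (L/2^(k+k₀)) * (μ (Ioo 0 L)).toReal := by
          refine hmz.trans ?_
          refine mul_le_mul ?_ ?_ ENNReal.toReal_nonneg (by positivity)
          · linarith [hj4 k]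
          · exact ENNReal.toReal_mono (measure_ne_top μ _)
              (measure_mono (Ioo_subset_Ioo hz.1.le (haIoo k).2.le))
        exact (Real.le_sqrt (norm_nonneg _) (by positivity)).2 hle2
      refine squeeze_zero (fun k => norm_nonneg _) hbnd ?_
      have h2 : Tendsto (fun k : ℕ => (L/2^(k+k₀)) * (μ (Ioo 0 L)).toReal) atTop (𝓝 0) := by
        simpa using (hshift k₀).mul_const ((μ (Ioo 0 L)).toReal)
      have h3 := h2.sqrt
      simpa [Real.sqrt_zero] using h3
    exact tendsto_nhds_unique (htendg.congr (fun k => hfa k)) htendf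
  have hbound : ∀ z z' : ℝ, 0 ≤ z → z < z' → z' ≤ L →
      (∫ t in z..z', ‖(𝒢L : ℝ → EuclideanSpace ℝ (Fin d)) t‖^2) ≤ (μ (Ioo z z')).toReal := by
    intro z z' hz hzz hz'
    have hzL : z < L := lt_of_lt_of_le hzz hz'
    have hz'0 : 0 < z' := lt_of_le_of_lt hz hzz
    obtain ⟨k₀, hk₀⟩ := harch (min (L - z) (min z' ((z' - z)/2)))
      (by refine lt_min ?_ (lt_min ?_ ?_) <;> linarith)
    have hk : ∀ k : ℕ, L / 2^(k+k₀) < min (L - z) (min z' ((z'-z)/2)) :=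
      fun k => lt_of_le_of_lt (hmono2 k k₀) hk₀
    have hA : ∀ k : ℕ, ∃ j, 1 ≤ j ∧ j ≤ 2^(k+k₀) - 1 ∧ z < pt L (k+k₀) j ∧
        pt L (k+k₀) j ≤ z + L/2^(k+k₀) :=
      fun k => hdy_above hL hz hzL ((hk k).trans_le (min_le_left _ _))
    have hB : ∀ k : ℕ, ∃ j, 1 ≤ j ∧ j ≤ 2^(k+k₀) - 1 ∧
        z' - L/2^(k+k₀) ≤ pt L (k+k₀) j ∧ pt L (k+k₀) j ≤ z' :=
      fun k => hdy_below hL hz'0 hz'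
        ((hk k).trans_le ((min_le_right _ _).trans (min_le_left _ _)))
    choose ja ha1 ha2 ha3 ha4 using hA
    choose jb hb1 hb2 hb3 hb4 using hB
    set a : ℕ → ℝ := fun k => pt L (k+k₀) (ja k) with hadef
    set b : ℕ → ℝ := fun k => pt L (k+k₀) (jb k) with hbdef
    have hab : ∀ k, a k < b k := by
      intro k
      have h3 : L/2^(k+k₀) < (z'-z)/2 :=
        (hk k).trans_le ((min_le_right _ _).trans (min_le_right _ _))
      calc a k ≤ z + L/2^(k+k₀) := ha4 k
        _ < z' - L/2^(k+k₀) := by linarith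
        _ ≤ b k := hb3 k
    have hjab : ∀ k, ja k ≤ jb k := by
      intro k
      by_contra hcon
      push_neg at hcon
      exact absurd (hab k) (not_lt.2 (pt_mono hL _ hcon.le))
    have hk2 : ∀ k, (∫ t in (a k)..(b k), ‖(𝒢L : ℝ → EuclideanSpace ℝ (Fin d)) t‖^2)
        ≤ (μ (Ioo z z')).toReal := by
      intro k
      rw [intervalIntegral.integral_of_le (hab k).le, integral_Ioc_eq_integral_Ioo]
      refine (key2 (k+k₀) (ja k) (jb k) (ha1 k) (hjab k) (hb2 k)).trans ?_
      exact ENNReal.toReal_mono (measure_ne_top μ _)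
        (measure_mono (Ioo_subset_Ioo (ha3 k).le (hb4 k)))
    set Φ : ℝ → ℝ := fun x => ∫ t in (0:ℝ)..x,
      ‖(𝒢L : ℝ → EuclideanSpace ℝ (Fin d)) t‖^2 with hΦdef
    have hΦcont : ContinuousOn Φ (Icc 0 L) := by
      have hcp := intervalIntegral.continuousOn_primitive_interval'
        (μ := volume) (f := fun t => ‖(𝒢L : ℝ → EuclideanSpace ℝ (Fin d)) t‖^2)
        (a := 0) (b₁ := 0) (b₂ := L)
        (II_of_Icc h𝒢sq ⟨le_rfl, hL.le⟩ ⟨hL.le, le_rfl⟩)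
        (by rw [uIcc_of_le hL.le]; exact ⟨le_rfl, hL.le⟩)
      rwa [uIcc_of_le hL.le] at hcp
    have hsubdiff : ∀ p ∈ Icc (0:ℝ) L, ∀ q ∈ Icc (0:ℝ) L, Φ q - Φ p =
        ∫ t in p..q, ‖(𝒢L : ℝ → EuclideanSpace ℝ (Fin d)) t‖^2 :=
      fun p hp q hq => intervalIntegral.integral_interval_sub_left
        (II_of_Icc h𝒢sq ⟨le_rfl, hL.le⟩ hq) (II_of_Icc h𝒢sq ⟨le_rfl, hL.le⟩ hp)
    have haIcc : ∀ k, a k ∈ Icc (0:ℝ) L :=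
      fun k => Ioo_subset_Icc_self (pt_mem hL (ha1 k) (ha2 k))
    have hbIcc : ∀ k, b k ∈ Icc (0:ℝ) L :=
      fun k => Ioo_subset_Icc_self (pt_mem hL (hb1 k) (hb2 k))
    have hatend : Tendsto a atTop (𝓝 z) := by
      refine tendsto_of_tendsto_of_tendsto_of_le_of_le (tendsto_const_nhds)
        ?_ (fun k => (ha3 k).le) (fun k => ha4 k)
      simpa using tendsto_const_nhds.add (hshift k₀)
    have hbtend : Tendsto b atTop (𝓝 z') := by
      refine tendsto_of_tendsto_of_tendsto_of_le_of_le
        ?_ (tendsto_const_nhds) (fun k => hb3 k) (fun k => hb4 k)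
      simpa using tendsto_const_nhds.sub (hshift k₀)
    have hΦa : Tendsto (fun k => Φ (a k)) atTop (𝓝 (Φ z)) :=
      (hΦcont z ⟨hz, hzL.le⟩).tendsto.comp
        (tendsto_nhdsWithin_of_tendsto_nhds_of_eventually_within a hatend
          (Eventually.of_forall haIcc))
    have hΦb : Tendsto (fun k => Φ (b k)) atTop (𝓝 (Φ z')) :=
      (hΦcont z' ⟨hz'0.le, hz'⟩).tendsto.comp
        (tendsto_nhdsWithin_of_tendsto_nhds_of_eventually_within b hbtend
          (Eventually.of_forall hbIcc))
    have hfinal := le_of_tendsto (hΦb.sub hΦa) (Eventually.of_forall (fun k => by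
      rw [hsubdiff (a k) (haIcc k) (b k) (hbIcc k)]
      exact hk2 k))
    rw [← hsubdiff z ⟨hz, hzL.le⟩ z' ⟨hz'0.le, hz'⟩]
    exact hfinal
  exact ⟨g, ⇑𝒢L, hgcont, hgf, h𝒢int1, h𝒢sq, hftc, hbound⟩
end
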